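/- arXiv:math/0406127 — 9 statements merged into one kernel-verified Lean document; each statement's English description precedes it below -/
import Mathlib

section
/- Let G be a finite abelian group, f: G → ℂ a function, and T ⊆ G. Then Σ_{t∈T} f(x−t) = (Σ_{x∈G} f(x))·(#T)/(#G) for all x ∈ G if and only if for every nontrivial character ξ ∈ Ĝ, either f̂(ξ) = 0 or χ̂_T(ξ) = 0. -/
/-!
The translate-sum `F x = ∑ t ∈ T, f (x - t)` has Fourier coefficients `f̂(ξ) · χ̂_T(ξ)` and total
mass `(∑ f) · #T`. By Fourier inversion, a function on `G` equals its mean everywhere exactly when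
all of its nontrivial Fourier coefficients vanish.
-/

open Finset

section FourierFiniteAbelian

variable {G : Type*} [AddCommGroup G] [Fintype G]

lemma sum_sum_sub_mul_addChar {R : Type*} [CommSemiring R] (f : G → R) (T : Finset G)
    (ψ : AddChar G R) :
    ∑ x, (∑ t ∈ T, f (x - t)) * ψ x = (∑ x, f x * ψ x) * ∑ t ∈ T, ψ t := by
  simp_rw [sum_mul, mul_sum, sum_comm (s := univ)]
  refine sum_congr rfl fun t _ => ?_
  rw [← Equiv.sum_comp (Equiv.addRight t)]
  simp [AddChar.map_add_eq_mul, mul_assoc]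

lemma sum_addChar_sum_mul_addChar_neg (g : G → ℂ) (z : G) :
    ∑ ψ : AddChar G ℂ, (∑ x, g x * ψ x) * ψ (-z) = Fintype.card G * g z := by
  classical
  calc ∑ ψ : AddChar G ℂ, (∑ x, g x * ψ x) * ψ (-z)
      = ∑ x, g x * ∑ ψ : AddChar G ℂ, ψ (x - z) := by
        simp_rw [sum_mul, mul_sum, sub_eq_add_neg, AddChar.map_add_eq_mul, mul_assoc]
        exact sum_comm
    _ = Fintype.card G * g z := by
        simp_rw [AddChar.sum_apply_eq_ite, sub_eq_zero, mul_ite, mul_zero, sum_ite_eq', mem_univ,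
          if_true, mul_comm]

lemma eq_zero_of_forall_sum_mul_addChar_eq_zero {g : G → ℂ}
    (hg : ∀ ψ : AddChar G ℂ, ∑ x, g x * ψ x = 0) : g = 0 := by
  funext z
  have hz := sum_addChar_sum_mul_addChar_neg g z
  simp only [hg, zero_mul, sum_const_zero] at hz
  exact (mul_eq_zero.mp hz.symm).resolve_left (Nat.cast_ne_zero.2 Fintype.card_ne_zero)

lemma sum_mul_addChar_eq_zero_of_ne_one (c : ℂ) {ψ : AddChar G ℂ} (hψ : ψ ≠ 1) :
    ∑ x, c * ψ x = 0 := by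
  rw [← mul_sum, AddChar.sum_eq_zero_iff_ne_zero.2 hψ, mul_zero]

lemma forall_eq_mean_iff_forall_sum_mul_addChar_eq_zero (g : G → ℂ) :
    (∀ x, g x = (∑ y, g y) / Fintype.card G) ↔
      ∀ ψ : AddChar G ℂ, ψ ≠ 1 → ∑ x, g x * ψ x = 0 := by
  set m := (∑ y, g y) / Fintype.card G
  have hcard : (Fintype.card G : ℂ) ≠ 0 := Nat.cast_ne_zero.2 Fintype.card_ne_zero
  constructor
  · intro hg ψ hψ
    simp_rw [hg]
    exact sum_mul_addChar_eq_zero_of_ne_one m hψ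
  · intro hg x
    suffices (fun y => g y - m) = 0 from sub_eq_zero.mp (congrFun this x)
    refine eq_zero_of_forall_sum_mul_addChar_eq_zero fun ψ => ?_
    simp_rw [sub_mul, sum_sub_distrib]
    rcases eq_or_ne ψ 1 with rfl | hψ
    · simp [m, mul_div_cancel₀ _ hcard]
    · rw [hg ψ hψ, sum_mul_addChar_eq_zero_of_ne_one m hψ, sub_zero]

end FourierFiniteAbelian

/-- For `f : G → ℂ` on a finite abelian group and `T ⊆ G`, the function
`x ↦ ∑_{t∈T} f(x-t)` is identically equal to `(∑_x f x) · #T / #G` iff for every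
nontrivial character `ξ` of `G` either `f̂(ξ) = 0` or `χ̂_T(ξ) = 0`. -/
theorem stmt2 (G : Type*) [AddCommGroup G] [Fintype G]
    (f : G → ℂ) (T : Finset G) :
    (∀ x : G, ∑ t ∈ T, f (x - t) =
        (∑ y : G, f y) * (T.card : ℂ) / (Fintype.card G : ℂ)) ↔
    (∀ ξ : AddChar G ℂ, ξ ≠ 1 →
      (∑ x : G, f x * ξ x = 0) ∨ (∑ t ∈ T, ξ t = 0)) := by
  have hmass : ∑ x, ∑ t ∈ T, f (x - t) = (∑ y, f y) * T.card := by
    simpa using sum_sum_sub_mul_addChar f T 1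
  rw [← hmass, forall_eq_mean_iff_forall_sum_mul_addChar_eq_zero]
  simp_rw [sum_sum_sub_mul_addChar, mul_eq_zero]
end

section
/- Let G be a finite abelian group, H ≤ G a subgroup, and T₁, ..., T_k ⊆ H subsets that share a common tiling complement T' ⊆ H (i.e., T_j + T' = H is a tiling for each j). Let S + S' = G/H be a tiling of the quotient group with #S = k, and choose representatives s₁, ..., s_k ∈ G of the cosets in S. Then Γ := ⋃_{j=1}^{k} (s_j + T_j) tiles G by translation; indeed, for any set of representatives S̃' ⊆ G of the cosets in S', the set T' + S̃' is a tiling complement of Γ in G. -/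
open scoped BigOperators Pointwise

/-- Proposition 1: If `T₁,…,T_k ⊆ H` share a common tiling complement
`T' ⊆ H` in a subgroup `H ≤ G`, and `S + S' = G/H` is a tiling of the quotient with
`#S = k`, and `s j` are representatives of the cosets in `S`, then
`Γ = ⋃_j (s j + T j)` tiles `G`; indeed for any system of representatives `S̃'` of `S'`,
the set `T' + S̃'` is a tiling complement of `Γ` in `G`. -/
theorem stmt4 (G : Type*) [AddCommGroup G] [Fintype G] [DecidableEq G]
    (H : AddSubgroup G) [DecidableEq (G ⧸ H)]
    (k : ℕ) (T : Fin k → Finset G) (T' : Finset G)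
    (hTH : ∀ j, (T j : Set G) ⊆ (H : Set G)) (hT'H : (T' : Set G) ⊆ (H : Set G))
    (htile : ∀ j, ∀ h ∈ H, ∃! p : G × G, p.1 ∈ T j ∧ p.2 ∈ T' ∧ p.1 + p.2 = h)
    (S S' : Finset (G ⧸ H))
    (hquot : ∀ q : G ⧸ H, ∃! p : (G ⧸ H) × (G ⧸ H), p.1 ∈ S ∧ p.2 ∈ S' ∧ p.1 + p.2 = q)
    (hScard : S.card = k)
    (s : Fin k → G)
    (hs : ∀ j, (QuotientAddGroup.mk (s j) : G ⧸ H) ∈ S)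
    (hs_inj : Function.Injective fun j : Fin k => (QuotientAddGroup.mk (s j) : G ⧸ H))
    (S'tilde : Finset G)
    (hrep : S'tilde.image (fun g => (QuotientAddGroup.mk g : G ⧸ H)) = S')
    (hrep_card : S'tilde.card = S'.card) :
    ∀ g : G, ∃! p : G × G,
      p.1 ∈ (Finset.univ.biUnion fun j : Fin k => (T j).image fun t => s j + t) ∧
      p.2 ∈ T' + S'tilde ∧ p.1 + p.2 = g := by

  have hinjS' : Set.InjOn (fun g => (QuotientAddGroup.mk g : G ⧸ H)) S'tilde := by
    apply Finset.injOn_of_card_image_eq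
    rw [hrep, hrep_card]
  have himg : (Finset.univ : Finset (Fin k)).image
      (fun j => (QuotientAddGroup.mk (s j) : G ⧸ H)) = S := by
    apply Finset.eq_of_subset_of_card_le
    · intro x hx
      obtain ⟨j, _, rfl⟩ := Finset.mem_image.mp hx
      exact hs j
    · rw [Finset.card_image_of_injective _ hs_inj, Finset.card_univ, Fintype.card_fin, hScard]
  intro g
  obtain ⟨⟨sig, sig'⟩, ⟨hsigS, hsig'S, hsum⟩, huq⟩ := hquot (QuotientAddGroup.mk g)
  simp only at hsigS hsig'S hsum
  obtain ⟨j, -, hj⟩ := Finset.mem_image.mp (himg ▸ hsigS)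
  obtain ⟨x, hxS', hx⟩ := Finset.mem_image.mp (hrep ▸ hsig'S)
  have hgH : g - s j - x ∈ H := by
    have h0 : ((g - s j - x : G) : G ⧸ H) = 0 := by
      rw [QuotientAddGroup.mk_sub, QuotientAddGroup.mk_sub, hj, hx, ← hsum]; abel
    exact (QuotientAddGroup.eq_zero_iff _).mp h0
  obtain ⟨⟨t, t'⟩, ⟨htT, ht'T, htt'⟩, huq2⟩ := htile j _ hgH
  simp only at htT ht'T htt'
  refine ⟨(s j + t, t' + x), ⟨?_, ?_, ?_⟩, ?_⟩
  · exact Finset.mem_biUnion.mpr ⟨j, Finset.mem_univ j,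
      Finset.mem_image.mpr ⟨t, htT, rfl⟩⟩
  · exact Finset.add_mem_add ht'T hxS'
  · have e : s j + t + (t' + x) = (t + t') + (s j + x) := by abel
    rw [e, htt']; abel
  · rintro ⟨a, b⟩ ⟨haG, hbT, hab⟩
    simp only at haG hbT hab
    obtain ⟨j2, -, hj2⟩ := Finset.mem_biUnion.mp haG
    obtain ⟨t2, ht2T, ht2⟩ := Finset.mem_image.mp hj2
    obtain ⟨t2', ht2'T, x2, hx2S', hbx⟩ := Finset.mem_add.mp hbT
    have ht2H : t2 ∈ H := hTH j2 ht2T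
    have ht2'H : t2' ∈ H := hT'H ht2'T
    have hma : (QuotientAddGroup.mk a : G ⧸ H) = QuotientAddGroup.mk (s j2) := by
      rw [← ht2, QuotientAddGroup.mk_add, (QuotientAddGroup.eq_zero_iff _).mpr ht2H, add_zero]
    have hmb : (QuotientAddGroup.mk b : G ⧸ H) = QuotientAddGroup.mk x2 := by
      rw [← hbx, QuotientAddGroup.mk_add, (QuotientAddGroup.eq_zero_iff _).mpr ht2'H, zero_add]
    have hpair := huq ((QuotientAddGroup.mk (s j2) : G ⧸ H), (QuotientAddGroup.mk x2 : G ⧸ H))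
      ⟨hs j2, hrep ▸ Finset.mem_image.mpr ⟨x2, hx2S', rfl⟩, by
        rw [← hma, ← hmb, ← QuotientAddGroup.mk_add, hab]⟩
    have hj2j : j2 = j := hs_inj (by
      have h := congrArg Prod.fst hpair
      simp only at h
      exact h.trans hj.symm)
    have hx2x : x2 = x := hinjS' hx2S' hxS' (by
      have h := congrArg Prod.snd hpair
      simp only at h
      exact h.trans hx.symm)
    subst hj2j
    subst hx2x
    have hsum2 : t2 + t2' = g - s j2 - x2 := by
      have : s j2 + t2 + (t2' + x2) = g := by rw [← ht2, ← hbx] at hab; exact hab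
      have e : t2 + t2' = (s j2 + t2 + (t2' + x2)) - s j2 - x2 := by abel
      rw [e, this]
    have hpair2 := huq2 (t2, t2') ⟨ht2T, ht2'T, hsum2⟩
    have h1 := congrArg Prod.fst hpair2
    have h2 := congrArg Prod.snd hpair2
    simp only at h1 h2
    ext
    · simp only
      rw [← ht2, h1]
    · simp only
      rw [← hbx, h2]
end

section
/- Let G be a finite abelian group, H ≤ G a subgroup, and T₁, ..., T_k ⊆ H subsets sharing a common spectrum L ⊆ Ĥ (i.e., L is a spectrum of T_j in H for each j). Let (Q, Q') be a spectral pair in G/H with #Q = k, and choose representatives q₁, ..., q_k ∈ G of the cosets in Q. Then Γ := ⋃_{j=1}^{k} (q_j + T_j) is a spectral set in G; a spectrum is given by L̃ + Q̃', where Q̃' is a lift of Q' to Ĝ and L̃ consists of extensions of the characters in L to G. -/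
/-!
Extend each `l ∈ L` to a character `e l` of `G` and inflate each `κ ∈ Q'` to `G`; the candidate
spectrum is `{e l * κ}`. For `ψ = (e l₁ * κ₁) * (e l₂ * κ₂)⁻¹` the sum over `Γ` factors as
`∑ⱼ ψ (q j) * ∑_{t ∈ T j} ψ t`, and `ψ` restricts to `l₁ * l₂⁻¹` on `H`. If `l₁ ≠ l₂` every inner
sum vanishes; if `l₁ = l₂` then `ψ` is the inflation of `κ₁ * κ₂⁻¹`, and the sum becomes
`#L * ∑_{y ∈ Q} (κ₁ * κ₂⁻¹) y = 0`.

Extensions exist because the kernel of restriction `Ĝ → Ĥ` embeds in the dual of `G ⧸ H`, so its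
image has at least `|G| / |G ⧸ H| = |H|` elements.
-/

open Function Finset

namespace AddChar

section Precomp

variable {A B M : Type*} [AddMonoid A] [AddMonoid B] [CommMonoid M]

def compAddMonoidHomHom (f : A →+ B) : AddChar B M →* AddChar A M where
  toFun ψ := ψ.compAddMonoidHom f
  map_one' := rfl
  map_mul' _ _ := rfl

@[simp] lemma compAddMonoidHomHom_apply (f : A →+ B) (ψ : AddChar B M) (a : A) :
    compAddMonoidHomHom f ψ a = ψ (f a) := rfl

end Precomp

variable {G M : Type*} [AddCommGroup G] [CommMonoid M] (H : AddSubgroup G)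

def quotientLift (ψ : AddChar G M) (hψ : ∀ h ∈ H, ψ h = 1) : AddChar (G ⧸ H) M :=
  toAddMonoidHomEquiv.symm <| QuotientAddGroup.lift H (toAddMonoidHomEquiv ψ) fun h hh => by
    simp [hψ h hh]

abbrev restrict : AddChar G M →* AddChar H M := compAddMonoidHomHom H.subtype

abbrev inflate : AddChar (G ⧸ H) M →* AddChar G M := compAddMonoidHomHom (QuotientAddGroup.mk' H)

lemma natCard_eq (A : Type*) [AddCommGroup A] [Finite A] :
    Nat.card (AddChar A ℂ) = Nat.card A := by
  have := Fintype.ofFinite A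
  simp [Nat.card_eq_fintype_card]

theorem restrict_surjective [Finite G] : Surjective (restrict (M := ℂ) H) := by
  refine MonoidHom.surjective_of_card_ker_le_div _ ?_
  have hker : Nat.card (restrict (M := ℂ) H).ker ≤ Nat.card (AddChar (G ⧸ H) ℂ) := by
    refine Nat.card_le_card_of_injective (fun ψ => quotientLift H ψ.1 fun h hh => ?_)
      fun ψ χ hψχ => ?_
    · exact DFunLike.congr_fun ψ.2 ⟨h, hh⟩
    · ext g; exact DFunLike.congr_fun hψχ (g : G ⧸ H)
  rw [natCard_eq, natCard_eq, ← H.card_mul_index, Nat.mul_div_cancel_left _ Nat.card_pos]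
  rwa [natCard_eq] at hker

lemma inflate_apply_coe (κ : AddChar (G ⧸ H) M) (h : H) : inflate H κ h = 1 := by
  simp [(QuotientAddGroup.eq_zero_iff _).2 h.2]

lemma restrict_inflate (κ : AddChar (G ⧸ H) M) : restrict H (inflate H κ) = 1 := by
  ext h
  exact inflate_apply_coe H κ h

lemma inflate_injective : Injective (inflate (M := M) H) :=
  compAddMonoidHom_injective_left _ (QuotientAddGroup.mk'_surjective H)

end AddChar

open AddChar

def IsSpectrum {A : Type*} [AddCommGroup A] (S : Finset A) (Λ : Finset (AddChar A ℂ)) : Prop :=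
  Λ.card = S.card ∧ ∀ lam ∈ Λ, ∀ mu ∈ Λ, lam ≠ mu → ∑ x ∈ S, (lam * mu⁻¹) x = 0

section Translates

variable {G ι : Type*} [AddCommGroup G] [DecidableEq G] {H : AddSubgroup G}

def translateUnion [Fintype ι] (q : ι → G) (T : ι → Finset H) : Finset G :=
  univ.biUnion fun j => (T j).image fun t : H => q j + (t : G)

variable {q : ι → G} (T : ι → Finset H)

lemma disjoint_image_translate (hq : Injective fun j => (q j : G ⧸ H)) {i j : ι} (hij : i ≠ j) :
    Disjoint ((T i).image fun t : H => q i + (t : G)) ((T j).image fun t : H => q j + (t : G)) := by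
  simp only [disjoint_left, mem_image, not_exists, not_and]
  rintro _ ⟨t, -, rfl⟩ s - hst
  refine hij (hq (QuotientAddGroup.eq.2 ?_))
  have : -q i + q j = t - s := by
    rw [← sub_eq_zero, show -q i + q j - (t - s) = q j + s - (q i + t) by abel, hst, sub_self]
  rw [this]
  exact H.sub_mem t.2 s.2

lemma card_translateUnion [Fintype ι] (hq : Injective fun j => (q j : G ⧸ H)) :
    (translateUnion q T).card = ∑ j, (T j).card := by
  rw [translateUnion, card_biUnion fun i _ j _ hij => disjoint_image_translate T hq hij]
  refine sum_congr rfl fun j _ => card_image_of_injective _ fun s t hst => ?_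
  exact Subtype.ext (add_left_cancel hst)

lemma sum_translateUnion [Fintype ι] (hq : Injective fun j => (q j : G ⧸ H)) {R : Type*}
    [CommSemiring R] (ψ : AddChar G R) :
    ∑ x ∈ translateUnion q T, ψ x = ∑ j, ψ (q j) * ∑ t ∈ T j, ψ t := by
  rw [translateUnion, sum_biUnion fun i _ j _ hij => disjoint_image_translate T hq hij]
  refine sum_congr rfl fun j _ => ?_
  rw [sum_image fun s _ t _ hst => Subtype.ext (add_left_cancel hst), mul_sum]
  simp only [map_add_eq_mul]

end Translates

section Spectrum

variable {G : Type*} [AddCommGroup G] {H : AddSubgroup G} {e : AddChar H ℂ → AddChar G ℂ}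

lemma injective_mul_inflate (he : ∀ l, restrict H (e l) = l) :
    Injective fun p : AddChar H ℂ × AddChar (G ⧸ H) ℂ => e p.1 * inflate H p.2 := by
  rintro ⟨l₁, κ₁⟩ ⟨l₂, κ₂⟩ h
  have hl : l₁ = l₂ := by
    simpa [he, restrict_inflate] using congrArg (restrict H) h
  subst hl
  simp only [mul_right_inj] at h
  rw [inflate_injective H h]

lemma restrict_mul_inflate_div (he : ∀ l, restrict H (e l) = l) (l₁ l₂ : AddChar H ℂ)
    (κ₁ κ₂ : AddChar (G ⧸ H) ℂ) :
    restrict H ((e l₁ * inflate H κ₁) * (e l₂ * inflate H κ₂)⁻¹) = l₁ * l₂⁻¹ := by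
  simp [he, restrict_inflate]

variable [DecidableEq G] [DecidableEq (G ⧸ H)] {ι : Type*} [Fintype ι] {q : ι → G}
  {T : ι → Finset H} {L : Finset (AddChar H ℂ)} {Q : Finset (G ⧸ H)} {Q' : Finset (AddChar (G ⧸ H) ℂ)}

theorem isSpectrum_translateUnion (hL : ∀ j, IsSpectrum (T j) L) (hQ : IsSpectrum Q Q')
    (hq : Injective fun j => (q j : G ⧸ H)) (hqQ : univ.image (fun j => (q j : G ⧸ H)) = Q)
    (he : ∀ l, restrict H (e l) = l) :
    IsSpectrum (translateUnion q T) ((L ×ˢ Q').image fun p => e p.1 * inflate H p.2) := by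
  have hT : ∀ j, (T j).card = L.card := fun j => (hL j).1.symm
  constructor
  · rw [card_image_of_injective _ (injective_mul_inflate he), card_product, hQ.1,
      card_translateUnion T hq, ← hqQ, card_image_of_injective _ hq]
    simp [hT, mul_comm]
  simp only [mem_image, mem_product, Prod.exists]
  rintro _ ⟨l₁, κ₁, ⟨hl₁, hκ₁⟩, rfl⟩ _ ⟨l₂, κ₂, ⟨hl₂, hκ₂⟩, rfl⟩ hne
  rw [sum_translateUnion T hq]
  by_cases hl : l₁ = l₂
  · subst hl
    have hκ : κ₁ ≠ κ₂ := by rintro rfl; exact hne rfl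
    rw [← div_eq_mul_inv, mul_div_mul_left_eq_div, div_eq_mul_inv, ← map_inv, ← map_mul]
    calc ∑ j, inflate H (κ₁ * κ₂⁻¹) (q j) * ∑ t ∈ T j, inflate H (κ₁ * κ₂⁻¹) t
        = ∑ j, (κ₁ * κ₂⁻¹) (q j : G ⧸ H) * L.card := by
          simp only [inflate_apply_coe, sum_const, hT, nsmul_eq_mul, mul_one]
          rfl
      _ = (∑ y ∈ Q, (κ₁ * κ₂⁻¹) y) * L.card := by
          rw [← hqQ, sum_image hq.injOn, sum_mul]
      _ = 0 := by rw [hQ.2 _ hκ₁ _ hκ₂ hκ, zero_mul]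
  · refine sum_eq_zero fun j _ => ?_
    have hres := DFunLike.congr_fun (restrict_mul_inflate_div he l₁ l₂ κ₁ κ₂)
    simp only [compAddMonoidHomHom_apply, AddSubgroup.coe_subtype] at hres
    rw [sum_congr rfl fun t _ => hres t, (hL j).2 _ hl₁ _ hl₂ hl, mul_zero]

end Spectrum

/-- Proposition 2: If `T₁,…,T_k ⊆ H` share a common spectrum `L ⊆ Ĥ`
(in the combinatorial sense: `#L = #T_j` and quotients of distinct elements of `L`
annihilate `χ̂_{T_j}`), and `(Q, Q')` is a spectral pair in `G/H` with `#Q = k`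
whose cosets have representatives `q j`, then `Γ = ⋃_j (q j + T j)` is spectral in `G`. -/
theorem stmt5 (G : Type*) [AddCommGroup G] [Fintype G] [DecidableEq G]
    (H : AddSubgroup G) [DecidableEq (G ⧸ H)]
    (k : ℕ) (T : Fin k → Finset H)
    (L : Finset (AddChar H ℂ))
    (hL : ∀ j, L.card = (T j).card ∧
      ∀ lam ∈ L, ∀ mu ∈ L, lam ≠ mu → ∑ x ∈ T j, (lam * mu⁻¹) x = 0)
    (Q : Finset (G ⧸ H)) (Q' : Finset (AddChar (G ⧸ H) ℂ))
    (hQQ' : Q'.card = Q.card ∧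
      ∀ lam ∈ Q', ∀ mu ∈ Q', lam ≠ mu → ∑ y ∈ Q, (lam * mu⁻¹) y = 0)
    (hQcard : Q.card = k)
    (q : Fin k → G)
    (hq : ∀ j, (QuotientAddGroup.mk (q j) : G ⧸ H) ∈ Q)
    (hq_inj : Function.Injective fun j : Fin k => (QuotientAddGroup.mk (q j) : G ⧸ H)) :
    ∃ Λ : Finset (AddChar G ℂ),
      Λ.card = (Finset.univ.biUnion fun j : Fin k =>
          (T j).image fun t : H => q j + (t : G)).card ∧
      ∀ lam ∈ Λ, ∀ mu ∈ Λ, lam ≠ mu →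
        ∑ x ∈ (Finset.univ.biUnion fun j : Fin k => (T j).image fun t : H => q j + (t : G)),
          (lam * mu⁻¹) x = 0 := by
  obtain ⟨e, he⟩ := (restrict_surjective H).hasRightInverse
  have hqQ : univ.image (fun j => (q j : G ⧸ H)) = Q :=
    eq_of_subset_of_card_le (image_subset_iff.2 fun j _ => hq j)
      (by rw [card_image_of_injective _ hq_inj, card_univ, Fintype.card_fin, hQcard])
  exact ⟨_, isSpectrum_translateUnion hL hQQ' hq_inj hqQ he⟩
end

section
/- Let G be a finite abelian group and T' ⊆ G a tile of G. Suppose L ⊆ Ĝ satisfies #L · #T' = #G and λμ⁻¹ ∉ Z(χ̂_{T'}) for all distinct λ, μ ∈ L (where Z(χ̂_{T'}) is the set of characters at which χ̂_{T'} vanishes). Then L is a spectrum of every tiling complement T of T' (so L is a universal spectrum for T'). -/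
/-!
For a tiling `A ⊕ B = G` the addition map `A × B → G` is a bijection, so `χ̂_A · χ̂_B = χ̂_G`
for every character, and `χ̂_G` vanishes at every nontrivial character. Hence for distinct
`λ, μ ∈ L` the character `λμ⁻¹`, which is not a zero of `χ̂_{T'}`, is a zero of `χ̂_T`; and
`#T = #G / #T' = #L`.
-/

open Finset

def IsAddTiling {G : Type*} [Add G] (A B : Finset G) : Prop :=
  ∀ g : G, ∃! p : G × G, p.1 ∈ A ∧ p.2 ∈ B ∧ p.1 + p.2 = g

namespace IsAddTiling

section AddMonoid

variable {G : Type*} [AddMonoid G] {A B : Finset G}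

theorem nonempty_left (h : IsAddTiling A B) : A.Nonempty :=
  let ⟨p, ⟨hp, _⟩, _⟩ := h 0
  ⟨p.1, hp⟩

theorem injOn_add (h : IsAddTiling A B) :
    (↑(A ×ˢ B) : Set (G × G)).InjOn fun p ↦ p.1 + p.2 := by
  intro p hp q hq hpq
  rw [coe_product, Set.mem_prod] at hp hq
  obtain ⟨_, _, huniq⟩ := h (p.1 + p.2)
  rw [huniq p ⟨hp.1, hp.2, rfl⟩, huniq q ⟨hq.1, hq.2, hpq.symm⟩]

variable [Fintype G]

theorem surjOn_add (h : IsAddTiling A B) :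
    (↑(A ×ˢ B) : Set (G × G)).SurjOn (fun p ↦ p.1 + p.2) ↑(univ : Finset G) := by
  intro g _
  obtain ⟨p, ⟨hpA, hpB, hp⟩, _⟩ := h g
  exact ⟨p, mem_product.2 ⟨hpA, hpB⟩, hp⟩

theorem card_mul_card (h : IsAddTiling A B) : #A * #B = Fintype.card G := by
  rw [← card_product, ← card_univ]
  exact card_nbij _ (fun _ _ ↦ mem_coe.2 (mem_univ _)) h.injOn_add h.surjOn_add

theorem sum_mul_sum {R : Type*} [CommSemiring R] (h : IsAddTiling A B) (ψ : AddChar G R) :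
    (∑ x ∈ A, ψ x) * (∑ x ∈ B, ψ x) = ∑ g, ψ g := by
  rw [Finset.sum_mul_sum, ← sum_product']
  exact sum_nbij _ (fun _ _ ↦ mem_univ _) h.injOn_add h.surjOn_add
    fun p _ ↦ (AddChar.map_add_eq_mul ψ p.1 p.2).symm

end AddMonoid

theorem sum_eq_zero_of_sum_ne_zero {G R : Type*} [AddGroup G] [Fintype G] [CommRing R]
    [IsDomain R] {A B : Finset G} (h : IsAddTiling A B) {ψ : AddChar G R} (hψ : ψ ≠ 1)
    (hA : ∑ x ∈ A, ψ x ≠ 0) : ∑ x ∈ B, ψ x = 0 := by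
  have hprod := h.sum_mul_sum ψ
  rw [AddChar.sum_eq_zero_of_ne_one hψ] at hprod
  exact (mul_eq_zero.1 hprod).resolve_left hA

end IsAddTiling

theorem stmt6_general (G : Type*) [AddCommGroup G] [Fintype G]
    (T' : Finset G)
    (L : Finset (AddChar G ℂ))
    (hcard : L.card * T'.card = Fintype.card G)
    (hzero : ∀ lam ∈ L, ∀ mu ∈ L, lam ≠ mu → ∑ x ∈ T', (lam * mu⁻¹) x ≠ 0) :
    ∀ T : Finset G,
      (∀ g : G, ∃! p : G × G, p.1 ∈ T' ∧ p.2 ∈ T ∧ p.1 + p.2 = g) →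
      (L.card = T.card ∧
        ∀ lam ∈ L, ∀ mu ∈ L, lam ≠ mu → ∑ x ∈ T, (lam * mu⁻¹) x = 0) := by
  intro T hT
  have htiling : IsAddTiling T' T := hT
  refine ⟨?_, fun lam hlam mu hmu hne ↦ ?_⟩
  · refine Nat.eq_of_mul_eq_mul_right htiling.nonempty_left.card_pos ?_
    rw [hcard, ← htiling.card_mul_card, Nat.mul_comm]
  · exact htiling.sum_eq_zero_of_sum_ne_zero (mul_inv_eq_one.not.2 hne)
      (hzero lam hlam mu hmu hne)

/-- If `T'` tiles the finite abelian group `G`, and `L ⊆ Ĝ` satisfies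
`#L · #T' = #G` and `χ̂_{T'}(λμ⁻¹) ≠ 0` for all distinct `λ, μ ∈ L`, then `L` is a
spectrum of every tiling complement `T` of `T'` (a universal spectrum for `T'`). -/
theorem stmt6 (G : Type*) [AddCommGroup G] [Fintype G]
    (T' : Finset G)
    (htile : ∃ T : Finset G, ∀ g : G, ∃! p : G × G, p.1 ∈ T' ∧ p.2 ∈ T ∧ p.1 + p.2 = g)
    (L : Finset (AddChar G ℂ))
    (hcard : L.card * T'.card = Fintype.card G)
    (hzero : ∀ lam ∈ L, ∀ mu ∈ L, lam ≠ mu → ∑ x ∈ T', (lam * mu⁻¹) x ≠ 0) :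
    ∀ T : Finset G,
      (∀ g : G, ∃! p : G × G, p.1 ∈ T' ∧ p.2 ∈ T ∧ p.1 + p.2 = g) →
      (L.card = T.card ∧
        ∀ lam ∈ L, ∀ mu ∈ L, lam ≠ mu → ∑ x ∈ T, (lam * mu⁻¹) x = 0) :=
  stmt6_general G T' L hcard hzero
end

section
/- Let G be a finite abelian group and T' ⊆ G a tile. If L ⊆ Ĝ satisfies #L · #T' = #G and (L−L) ∩ Z(χ̂_{T'}) = ∅ (differences of distinct elements avoid the Fourier zero set of T'), then for every spectrum Q of T' the pair L + Q = Ĝ is a tiling of the dual group (L is a universal tiling complement of all spectra of T'). -/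
/-!
If `L / L` and `Q / Q` meet only in `1`, then `(l, q) ↦ l * q` is injective on `L × Q`; when
`#L * #Q` is the order of the group it is therefore a bijection onto the group.
For a spectrum `Q` of `T'`, every nontrivial quotient in `Q / Q` is a zero of `χ̂_{T'}`, while by
hypothesis no nontrivial quotient in `L / L` is, and `#Q = #T'` together with `#Ĝ = #G` gives the
cardinality condition.
-/

open scoped Pointwise

namespace Finset

variable {M : Type*} [CommGroup M] [DecidableEq M] {A B : Finset M}

theorem injOn_mul_of_div_inter_div_subset_one (hAB : A / A ∩ (B / B) ⊆ {1}) :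
    Set.InjOn (fun p : M × M => p.1 * p.2) ↑(A ×ˢ B) := by
  rintro ⟨a₁, b₁⟩ h₁ ⟨a₂, b₂⟩ h₂ (he : a₁ * b₁ = a₂ * b₂)
  simp only [coe_product, Set.mem_prod, mem_coe] at h₁ h₂
  have hdiv : a₁ / a₂ = b₂ / b₁ := by
    rw [div_eq_div_iff_mul_eq_mul, he, mul_comm]
  have hone : a₁ / a₂ = 1 := mem_singleton.mp <| hAB <| mem_inter.mpr
    ⟨div_mem_div h₁.1 h₂.1, hdiv ▸ div_mem_div h₂.2 h₁.2⟩
  obtain rfl : a₁ = a₂ := div_eq_one.mp hone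
  rw [mul_left_cancel he]

theorem existsUnique_mul_eq_of_div_inter_div_subset_one [Fintype M]
    (hAB : A / A ∩ (B / B) ⊆ {1}) (hcard : #A * #B = Fintype.card M) (x : M) :
    ∃! p : M × M, p.1 ∈ A ∧ p.2 ∈ B ∧ p.1 * p.2 = x := by
  have hinj := injOn_mul_of_div_inter_div_subset_one hAB
  have himage : (A ×ˢ B).image (fun p => p.1 * p.2) = univ :=
    eq_univ_of_card _ <| by rw [card_image_of_injOn hinj, card_product, hcard]
  obtain ⟨p, hp, rfl⟩ := mem_image.mp (himage ▸ mem_univ x)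
  obtain ⟨hpA, hpB⟩ := mem_product.mp hp
  refine ⟨p, ⟨hpA, hpB, rfl⟩, ?_⟩
  rintro q ⟨hqA, hqB, hq⟩
  exact hinj (mem_product.mpr ⟨hqA, hqB⟩) hp hq

end Finset

theorem stmt7_general (G : Type*) [AddCommGroup G] [Fintype G]
    (T' : Finset G)
    (L : Finset (AddChar G ℂ))
    (hcard : L.card * T'.card = Fintype.card G)
    (hzero : ∀ lam ∈ L, ∀ mu ∈ L, lam ≠ mu → ∑ x ∈ T', (lam * mu⁻¹) x ≠ 0) :
    ∀ Q : Finset (AddChar G ℂ),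
      (Q.card = T'.card ∧
        ∀ lam ∈ Q, ∀ mu ∈ Q, lam ≠ mu → ∑ x ∈ T', (lam * mu⁻¹) x = 0) →
      ∀ χ : AddChar G ℂ,
        ∃! p : AddChar G ℂ × AddChar G ℂ, p.1 ∈ L ∧ p.2 ∈ Q ∧ p.1 * p.2 = χ := by
  classical
  rintro Q ⟨hQcard, hQ⟩
  refine Finset.existsUnique_mul_eq_of_div_inter_div_subset_one ?_ (by
    rwa [hQcard, AddChar.card_eq])
  intro ξ hξ
  obtain ⟨hξL, hξQ⟩ := Finset.mem_inter.mp hξ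
  obtain ⟨l₁, hl₁, l₂, hl₂, rfl⟩ := Finset.mem_div.mp hξL
  obtain ⟨q₁, hq₁, q₂, hq₂, hq⟩ := Finset.mem_div.mp hξQ
  by_contra hne
  have hl : l₁ ≠ l₂ := fun h => hne (by simp [h])
  have hq' : q₁ ≠ q₂ := fun h => hne (by simp [← hq, h])
  refine hzero l₁ hl₁ l₂ hl₂ hl ?_
  rw [← div_eq_mul_inv, ← hq, div_eq_mul_inv]
  exact hQ q₁ hq₁ q₂ hq₂ hq'

/-- If `T'` tiles the finite abelian group `G` and `L ⊆ Ĝ` satisfies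
`#L · #T' = #G` with quotients of distinct elements of `L` avoiding the zero set of
`χ̂_{T'}`, then for every spectrum `Q` of `T'` the pair `L + Q = Ĝ` is a tiling of the
dual group: every character factors uniquely as a product of an element of `L` and an
element of `Q`. -/
theorem stmt7 (G : Type*) [AddCommGroup G] [Fintype G]
    (T' : Finset G)
    (htile : ∃ T : Finset G, ∀ g : G, ∃! p : G × G, p.1 ∈ T' ∧ p.2 ∈ T ∧ p.1 + p.2 = g)
    (L : Finset (AddChar G ℂ))
    (hcard : L.card * T'.card = Fintype.card G)
    (hzero : ∀ lam ∈ L, ∀ mu ∈ L, lam ≠ mu → ∑ x ∈ T', (lam * mu⁻¹) x ≠ 0) :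
    ∀ Q : Finset (AddChar G ℂ),
      (Q.card = T'.card ∧
        ∀ lam ∈ Q, ∀ mu ∈ Q, lam ≠ mu → ∑ x ∈ T', (lam * mu⁻¹) x = 0) →
      ∀ χ : AddChar G ℂ,
        ∃! p : AddChar G ℂ × AddChar G ℂ, p.1 ∈ L ∧ p.2 ∈ Q ∧ p.1 * p.2 = χ :=
  stmt7_general G T' L hcard hzero
end

section
/- If a finite subset A of an abelian group G tiles G by translation (there is T ⊆ G with A + T = G a tiling), then A tiles the subgroup H generated by A − A (equivalently, a suitable translate of A tiles the subgroup it generates). -/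
/-- The tile `t = -a + g` of any `g ∈ H` lies in `H`, since `a ∈ A ⊆ H`. -/
theorem AddSubgroup.existsUnique_add_eq_of_subset {G : Type*} [AddGroup G] {A T : Set G}
    {H : AddSubgroup G} (hAH : A ⊆ H)
    (htile : ∀ g : G, ∃! p : G × G, p.1 ∈ A ∧ p.2 ∈ T ∧ p.1 + p.2 = g) :
    ∀ g ∈ H, ∃! p : G × G, p.1 ∈ A ∧ (p.2 ∈ T ∧ p.2 ∈ H) ∧ p.1 + p.2 = g := by
  intro g hg
  obtain ⟨p, ⟨hpA, hpT, hsum⟩, huniq⟩ := htile g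
  have hpH : p.2 ∈ H := by
    rw [eq_neg_add_of_add_eq hsum]
    exact H.add_mem (H.neg_mem (hAH hpA)) hg
  exact ⟨p, ⟨hpA, ⟨hpT, hpH⟩, hsum⟩, fun q ⟨hqA, ⟨hqT, _⟩, hqsum⟩ => huniq q ⟨hqA, hqT, hqsum⟩⟩

theorem stmt9_general (G : Type*) [AddCommGroup G]
    (A T : Finset G)
    (htile : ∀ g : G, ∃! p : G × G, p.1 ∈ A ∧ p.2 ∈ T ∧ p.1 + p.2 = g) :
    ∀ g ∈ AddSubgroup.closure (A : Set G),
      ∃! p : G × G, p.1 ∈ A ∧ (p.2 ∈ T ∧ p.2 ∈ AddSubgroup.closure (A : Set G)) ∧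
        p.1 + p.2 = g :=
  AddSubgroup.existsUnique_add_eq_of_subset AddSubgroup.subset_closure htile

/-- If a finite subset `A` of a finite abelian group `G` containing `0`
tiles `G` with complement `T`, then `A` tiles the subgroup `H` generated by `A`:
`A + (T ∩ H) = H` is a tiling of `H`. -/
theorem stmt9 (G : Type*) [AddCommGroup G] [Fintype G]
    (A T : Finset G) (h0 : (0 : G) ∈ A)
    (htile : ∀ g : G, ∃! p : G × G, p.1 ∈ A ∧ p.2 ∈ T ∧ p.1 + p.2 = g) :
    ∀ g ∈ AddSubgroup.closure (A : Set G),
      ∃! p : G × G, p.1 ∈ A ∧ (p.2 ∈ T ∧ p.2 ∈ AddSubgroup.closure (A : Set G)) ∧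
        p.1 + p.2 = g :=
  stmt9_general G A T htile
end

section
/- Let G = (ℤ/6)⁵ and let K ⊆ G be the 6-element set consisting of the columns of the matrix with rows (0,0,2,2,4,4), (0,2,0,4,4,2), (0,2,4,0,2,4), (0,4,4,2,0,2), (0,4,2,4,2,0). Then K does not tile G by translation. -/
/-!
A translation tile `K` contained in a subgroup `H` also tiles `H`: in a tiling `K ⊕ T = G`, an
element of `H` can only be covered by a translate `k + t` with `t ∈ H`. Hence `#K` divides `#H`.
Every element of the given `K` is killed by `3`, so `K` lies in the `3`-torsion subgroup, which
has no element of order `2` and therefore odd order by Cauchy's theorem; but `#K = 6` is even.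
-/

open Finset

variable {G : Type*} [AddCommGroup G]

def IsTranslationTiling (K T : Finset G) : Prop :=
  ∀ g : G, ∃! p : G × G, p.1 ∈ K ∧ p.2 ∈ T ∧ p.1 + p.2 = g

namespace IsTranslationTiling

variable {K T : Finset G}

theorem card_dvd_card_addSubgroup [Fintype G] [DecidableEq G] (h : IsTranslationTiling K T)
    (H : AddSubgroup G) [DecidablePred (· ∈ H)] (hK : ∀ k ∈ K, k ∈ H) :
    #K ∣ Nat.card H := by
  have hcount : #(K ×ˢ {t ∈ T | t ∈ H}) = #{g | g ∈ H} := by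
    refine card_nbij (fun p => p.1 + p.2) ?_ ?_ ?_
    · rintro ⟨k, t⟩ hkt
      simp only [coe_product, coe_filter, Set.mem_prod, Set.mem_ofPred_eq] at hkt
      simpa using H.add_mem (hK k hkt.1) hkt.2.2
    · rintro ⟨k, t⟩ hkt ⟨k', t'⟩ hkt' hsum
      simp only [coe_product, coe_filter, Set.mem_prod, Set.mem_ofPred_eq] at hkt hkt'
      exact (h (k + t)).unique ⟨hkt.1, hkt.2.1, rfl⟩ ⟨hkt'.1, hkt'.2.1, hsum.symm⟩
    · intro g hg
      simp only [coe_filter, mem_univ, true_and, Set.mem_ofPred_eq] at hg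
      obtain ⟨⟨k, t⟩, ⟨hk, ht, rfl⟩, -⟩ := h g
      have htH : t ∈ H := by simpa using H.sub_mem hg (hK k hk)
      exact ⟨(k, t), by simp [hk, ht, htH], rfl⟩
  rw [Nat.card_eq_fintype_card, Fintype.card_subtype, ← hcount, card_product]
  exact dvd_mul_right _ _

theorem dvd_of_prime_dvd_card [Finite G] (h : IsTranslationTiling K T) {p n : ℕ}
    (hp : p.Prime) (hpK : p ∣ #K) (hK : ∀ k ∈ K, n • k = 0) : p ∣ n := by
  classical
  have := Fintype.ofFinite G
  have : Fact p.Prime := ⟨hp⟩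
  have hKH : ∀ k ∈ K, k ∈ AddSubgroup.torsionBy G n := fun k hk =>
    AddSubgroup.torsionBy.nsmul_iff.mpr (hK k hk)
  obtain ⟨x, hx⟩ := exists_prime_addOrderOf_dvd_card' p
    (hpK.trans (h.card_dvd_card_addSubgroup _ hKH))
  rw [← hx]
  exact addOrderOf_dvd_of_nsmul_eq_zero (AddSubgroup.torsionBy.nsmul x)

end IsTranslationTiling

/-- In `G = (ℤ/6)⁵`, the 6-element set `K` given by the columns of the
stated matrix does not tile `G` by translation. -/
theorem stmt11 :
    let G := Fin 5 → ZMod 6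
    let K : Finset G :=
      {![0,0,0,0,0], ![0,2,2,4,4], ![2,0,4,4,2], ![2,4,0,2,4], ![4,4,2,0,2], ![4,2,4,2,0]}
    ¬ ∃ T : Finset G, ∀ g : G, ∃! p : G × G, p.1 ∈ K ∧ p.2 ∈ T ∧ p.1 + p.2 = g := by
  intro G K
  rintro ⟨T, hT⟩
  have hK : ∀ k ∈ K, 3 • k = 0 := by
    intro k hk
    fin_cases hk <;> decide
  have h2K : 2 ∣ #K := by decide
  have := IsTranslationTiling.dvd_of_prime_dvd_card (T := T) hT Nat.prime_two h2K hK
  omega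
end

section
/- In G = (ℤ/6)⁵, the set E = {0, e₁, ..., e₅} admits 15 tiling complements T₀, ..., T₁₄ (kernels of the homomorphisms x ↦ ⟨v_j, x⟩ mod 6 where the v_j are suitable coordinate permutations of (1,2,3,4,5)) such that the intersection ⋂_{j=0}^{14} Z(χ̂_{T_j}) meets K − K only in 0, where K is the set of columns of the matrix with rows (0,0,2,2,4,4), (0,2,0,4,4,2), (0,2,4,0,2,4), (0,4,4,2,0,2), (0,4,2,4,2,0). Consequently, E has no universal spectrum in G: there is no set L ⊆ Ĝ that is simultaneously a spectrum of every tiling complement of E. -/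
open scoped BigOperators Pointwise
open Complex Real

set_option maxRecDepth 100000

namespace Stmt14Aux

abbrev G6 : Type := Fin 5 → ZMod 6

def vlist : Fin 15 → G6 := ![
  ![3,1,4,2,5], ![1,3,2,5,4], ![1,2,3,4,5], ![2,5,1,3,4], ![2,1,5,4,3],
  ![1,2,4,3,5], ![1,4,2,5,3], ![2,1,3,4,5], ![2,3,1,5,4], ![3,2,1,5,4],
  ![1,2,5,4,3], ![1,4,3,2,5], ![1,3,4,2,5], ![1,2,5,3,4], ![3,2,1,4,5]]

def E' : Finset G6 := insert 0 (Finset.univ.image fun j : Fin 5 => Pi.single j 1)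

def K' : Finset G6 :=
  {![0,0,0,0,0], ![0,2,2,4,4], ![2,0,4,4,2], ![2,4,0,2,4], ![4,4,2,0,2], ![4,2,4,2,0]}

def ker' (v : G6) : Finset G6 := Finset.univ.filter fun x : G6 => ∑ i, v i * x i = 0

def par : ZMod 6 → ZMod 2 := fun a => (a.val : ZMod 2)

lemma hEcard : E'.card = 6 := by decide
lemma hKcard : K'.card = 6 := by decide
lemma himg : ∀ j : Fin 15, E'.image (fun e => ∑ i, vlist j i * e i) = Finset.univ := by decide
lemma par_add : ∀ a b : ZMod 6, par (a + b) = par a + par b := by decide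
lemma hKpar : ∀ k ∈ K', ∀ i, par (k i) = 0 := by
  intro k hk
  fin_cases hk <;> decide
lemma par_fiber : (Finset.univ.filter fun a : ZMod 6 => par a = 0).card = 3 := by decide

lemma hKK' : ∀ a ∈ K', ∀ b ∈ K',
    ∃ j : Fin 15, ∃ c : ZMod 6, ∀ i, a i - b i = c * vlist j i := by
  intro a ha b hb
  fin_cases ha <;> fin_cases hb <;> decide

def p0 : Equiv.Perm (Fin 5) :=
  ⟨![2,0,3,1,4], ![1,3,0,2,4], by intro x; fin_cases x <;> rfl, by intro x; fin_cases x <;> rfl⟩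
def p1 : Equiv.Perm (Fin 5) :=
  ⟨![0,2,1,4,3], ![0,2,1,4,3], by intro x; fin_cases x <;> rfl, by intro x; fin_cases x <;> rfl⟩
def p2 : Equiv.Perm (Fin 5) :=
  ⟨![0,1,2,3,4], ![0,1,2,3,4], by intro x; fin_cases x <;> rfl, by intro x; fin_cases x <;> rfl⟩
def p3 : Equiv.Perm (Fin 5) :=
  ⟨![1,4,0,2,3], ![2,0,3,4,1], by intro x; fin_cases x <;> rfl, by intro x; fin_cases x <;> rfl⟩
def p4 : Equiv.Perm (Fin 5) :=
  ⟨![1,0,4,3,2], ![1,0,4,3,2], by intro x; fin_cases x <;> rfl, by intro x; fin_cases x <;> rfl⟩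
def p5 : Equiv.Perm (Fin 5) :=
  ⟨![0,1,3,2,4], ![0,1,3,2,4], by intro x; fin_cases x <;> rfl, by intro x; fin_cases x <;> rfl⟩
def p6 : Equiv.Perm (Fin 5) :=
  ⟨![0,3,1,4,2], ![0,2,4,1,3], by intro x; fin_cases x <;> rfl, by intro x; fin_cases x <;> rfl⟩
def p7 : Equiv.Perm (Fin 5) :=
  ⟨![1,0,2,3,4], ![1,0,2,3,4], by intro x; fin_cases x <;> rfl, by intro x; fin_cases x <;> rfl⟩
def p8 : Equiv.Perm (Fin 5) :=
  ⟨![1,2,0,4,3], ![2,0,1,4,3], by intro x; fin_cases x <;> rfl, by intro x; fin_cases x <;> rfl⟩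
def p9 : Equiv.Perm (Fin 5) :=
  ⟨![2,1,0,4,3], ![2,1,0,4,3], by intro x; fin_cases x <;> rfl, by intro x; fin_cases x <;> rfl⟩
def p10 : Equiv.Perm (Fin 5) :=
  ⟨![0,1,4,3,2], ![0,1,4,3,2], by intro x; fin_cases x <;> rfl, by intro x; fin_cases x <;> rfl⟩
def p11 : Equiv.Perm (Fin 5) :=
  ⟨![0,3,2,1,4], ![0,3,2,1,4], by intro x; fin_cases x <;> rfl, by intro x; fin_cases x <;> rfl⟩
def p12 : Equiv.Perm (Fin 5) :=
  ⟨![0,2,3,1,4], ![0,3,1,2,4], by intro x; fin_cases x <;> rfl, by intro x; fin_cases x <;> rfl⟩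
def p13 : Equiv.Perm (Fin 5) :=
  ⟨![0,1,4,2,3], ![0,1,3,4,2], by intro x; fin_cases x <;> rfl, by intro x; fin_cases x <;> rfl⟩
def p14 : Equiv.Perm (Fin 5) :=
  ⟨![2,1,0,3,4], ![2,1,0,3,4], by intro x; fin_cases x <;> rfl, by intro x; fin_cases x <;> rfl⟩
def perms : Fin 15 → Equiv.Perm (Fin 5) := ![p0, p1, p2, p3, p4, p5, p6, p7, p8, p9, p10, p11, p12, p13, p14]

lemma hperm : ∀ j : Fin 15, ∃ σ : Equiv.Perm (Fin 5),
    vlist j = (![1,2,3,4,5] : Fin 5 → ZMod 6) ∘ σ := by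
  intro j
  refine ⟨perms j, ?_⟩
  fin_cases j <;> decide

noncomputable def e6 : ZMod 6 → ℂ := fun a => Complex.exp (2 * π * Complex.I * (a.val : ℂ) / 6)

lemma exp_mod (m : ℕ) :
    Complex.exp (2 * π * Complex.I * ((m % 6 : ℕ) : ℂ) / 6) =
      Complex.exp (2 * π * Complex.I * (m : ℂ) / 6) := by
  conv_rhs => rw [show m = 6 * (m / 6) + m % 6 from (Nat.div_add_mod m 6).symm]
  have h : (2 * ↑π * Complex.I * ((6 * (m / 6) + m % 6 : ℕ) : ℂ) / 6) =
      ((m / 6 : ℕ) : ℂ) * (2 * ↑π * Complex.I) + 2 * ↑π * Complex.I * ((m % 6 : ℕ) : ℂ) / 6 := by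
    push_cast; ring
  rw [h, Complex.exp_add, Complex.exp_nat_mul_two_pi_mul_I, one_mul]

lemma e6_zero : e6 0 = 1 := by
  simp [e6, ZMod.val_zero]

lemma e6_add (a b : ZMod 6) : e6 (a + b) = e6 a * e6 b := by
  unfold e6
  rw [← Complex.exp_add, ZMod.val_add, exp_mod]
  push_cast; ring_nf

lemma e6_natCast (m : ℕ) : e6 (m : ZMod 6) = Complex.exp (2 * π * Complex.I * (m : ℂ) / 6) := by
  unfold e6
  rw [ZMod.val_natCast, exp_mod]

lemma e6_nsmul (n : ℕ) (a : ZMod 6) : e6 (n • a) = e6 a ^ n := by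
  induction n with
  | zero => simpa using e6_zero
  | succ k ih => rw [succ_nsmul, e6_add, ih, pow_succ]

lemma e6_sum {ι : Type*} (s : Finset ι) (f : ι → ZMod 6) :
    e6 (∑ i ∈ s, f i) = ∏ i ∈ s, e6 (f i) := by
  classical
  induction s using Finset.induction_on with
  | empty => simpa using e6_zero
  | insert _ _ h ih => rw [Finset.sum_insert h, Finset.prod_insert h, e6_add, ih]

lemma addChar_sum {A : Type*} [AddCommMonoid A] (ψ : AddChar A ℂ) {ι : Type*}
    (s : Finset ι) (f : ι → A) : ψ (∑ i ∈ s, f i) = ∏ i ∈ s, ψ (f i) := by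
  classical
  induction s using Finset.induction_on with
  | empty => simpa using ψ.map_zero_eq_one
  | insert _ _ h ih => rw [Finset.sum_insert h, Finset.prod_insert h, ψ.map_add_eq_mul, ih]

lemma char_eq (lam : AddChar G6 ℂ) : ∃ w : G6, ∀ x, lam x = e6 (∑ i, w i * x i) := by
  have hroot : ∀ i : Fin 5, ∃ c : ZMod 6, lam (Pi.single i 1) = e6 c := by
    intro i
    have h6 : lam (Pi.single i 1) ^ 6 = 1 := by
      rw [← AddChar.map_nsmul_eq_pow]
      have h0 : (6 : ℕ) • (Pi.single i 1 : G6) = 0 := by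
        ext j
        by_cases hj : j = i
        · simp [hj, Pi.single_apply]; decide
        · simp [hj, Pi.single_apply]
      rw [h0, AddChar.map_zero_eq_one]
    obtain ⟨c, hc, hce⟩ := (Complex.isPrimitiveRoot_exp 6 (by norm_num)).eq_pow_of_pow_eq_one h6
    refine ⟨(c : ZMod 6), ?_⟩
    rw [e6_natCast, ← hce, ← Complex.exp_nat_mul]
    ring_nf
  choose w hw using hroot
  refine ⟨w, fun x => ?_⟩
  have hx : x = ∑ i, Pi.single i (x i) := (Finset.univ_sum_single x).symm
  conv_lhs => rw [hx]
  rw [addChar_sum, e6_sum]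
  refine Finset.prod_congr rfl fun i _ => ?_
  have h1 : Pi.single i (x i) = ((x i).val : ℕ) • (Pi.single i 1 : G6) := by
    ext j
    by_cases hj : j = i <;>
      simp [hj, Pi.single_apply, nsmul_eq_mul, ZMod.natCast_val, ZMod.cast_id]
  rw [h1, AddChar.map_nsmul_eq_pow, hw i, ← e6_nsmul]
  congr 1
  rw [nsmul_eq_mul, ZMod.natCast_val, ZMod.cast_id, mul_comm]

lemma dot_sub (v a b : G6) : ∑ i, v i * (a - b) i = (∑ i, v i * a i) - ∑ i, v i * b i := by
  rw [← Finset.sum_sub_distrib]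
  exact Finset.sum_congr rfl fun i _ => by simp [mul_sub]

lemma tile_of (v : G6) (himg : E'.image (fun e => ∑ i, v i * e i) = Finset.univ) :
    ∀ g : G6, ∃! p : G6 × G6, p.1 ∈ E' ∧ p.2 ∈ ker' v ∧ p.1 + p.2 = g := by
  have hinj : Set.InjOn (fun e => ∑ i, v i * e i) (E' : Set G6) := by
    apply Finset.injOn_of_card_image_eq
    rw [himg, hEcard, Finset.card_univ]; simp
  intro g
  have hmem : (∑ i, v i * g i) ∈ E'.image (fun e => ∑ i, v i * e i) := by
    rw [himg]; exact Finset.mem_univ _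
  obtain ⟨e, he, hee⟩ := Finset.mem_image.mp hmem
  refine ⟨(e, g - e), ⟨he, ?_, by simp⟩, ?_⟩
  · simp only [ker', Finset.mem_filter, Finset.mem_univ, true_and]
    rw [dot_sub, hee, sub_self]
  · rintro ⟨e', t'⟩ ⟨he', ht', hsum⟩
    simp only [ker', Finset.mem_filter, Finset.mem_univ, true_and] at ht'
    have ht'' : t' = g - e' := by
      have h := hsum; simp only at h; rw [← h]; abel
    have he'' : (∑ i, v i * e' i) = ∑ i, v i * g i := by
      have h0 := ht'; rw [ht'', dot_sub] at h0
      exact (sub_eq_zero.mp h0).symm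
    have : e' = e := hinj he' he (by simpa [hee] using he'')
    simp [this, ht'', hee]

lemma card_of_tile (T : Finset G6)
    (h : ∀ g : G6, ∃! p : G6 × G6, p.1 ∈ E' ∧ p.2 ∈ T ∧ p.1 + p.2 = g) :
    6 * T.card = 7776 := by
  have hb : (E' ×ˢ T).card = (Finset.univ : Finset G6).card := by
    refine Finset.card_bij (fun p _ => p.1 + p.2) (fun p _ => Finset.mem_univ _) ?_ ?_
    · rintro p hp q hq hpq
      rw [Finset.mem_product] at hp hq
      obtain ⟨w, hw, hun⟩ := h (p.1 + p.2)
      rw [hun p ⟨hp.1, hp.2, rfl⟩, hun q ⟨hq.1, hq.2, hpq.symm⟩]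
    · intro g _
      obtain ⟨p, hp, _⟩ := h g
      exact ⟨p, Finset.mem_product.mpr ⟨hp.1, hp.2.1⟩, hp.2.2⟩
  rw [Finset.card_product, hEcard] at hb
  rw [hb, Finset.card_univ]
  simp [Fintype.card_fun]

lemma zero_mem_ker (v : G6) : (0 : G6) ∈ ker' v := by
  simp [ker']

end Stmt14Aux

open Stmt14Aux in
/-- Proposition `usc`: In `G = (ℤ/6)⁵`, there are 15 tiling complements
`T₀, …, T₁₄` of `E = {0, e₁, …, e₅}`, each the kernel of `x ↦ ⟨v_j, x⟩` for a suitable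
coordinate permutation `v_j` of `(1,2,3,4,5)`, such that `⋂_j Z(χ̂_{T_j})` meets `K - K`
only in `0`; consequently `E` has no universal spectrum in `G`. -/
theorem stmt14 :
    let G := Fin 5 → ZMod 6
    let E : Finset G := insert 0 (Finset.univ.image fun j : Fin 5 => Pi.single j 1)
    let K : Finset G :=
      {![0,0,0,0,0], ![0,2,2,4,4], ![2,0,4,4,2], ![2,4,0,2,4], ![4,4,2,0,2], ![4,2,4,2,0]}
    let ker : G → Finset G := fun v => Finset.univ.filter fun x : G => ∑ i, v i * x i = 0
    let ft : Finset G → G → ℂ := fun T u =>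
      ∑ x ∈ T, Complex.exp (2 * π * Complex.I * ((∑ i, u i * x i : ZMod 6).val : ℂ) / 6)
    (∃ v : Fin 15 → G,
      (∀ j, ∃ σ : Equiv.Perm (Fin 5), v j = ![1,2,3,4,5] ∘ σ) ∧
      (∀ j, ∀ g : G, ∃! p : G × G, p.1 ∈ E ∧ p.2 ∈ ker (v j) ∧ p.1 + p.2 = g) ∧
      (∀ u ∈ K - K, u ≠ 0 → ∃ j, ft (ker (v j)) u ≠ 0)) ∧
    ¬ ∃ L : Finset (AddChar G ℂ),
        ∀ T : Finset G,
          (∀ g : G, ∃! p : G × G, p.1 ∈ E ∧ p.2 ∈ T ∧ p.1 + p.2 = g) →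
          (L.card = T.card ∧
            ∀ lam ∈ L, ∀ mu ∈ L, lam ≠ mu → ∑ x ∈ T, (lam * mu⁻¹) x = 0) := by
  intro G E K ker ft
  have tiles : ∀ j : Fin 15, ∀ g : G6, ∃! p : G6 × G6,
      p.1 ∈ E' ∧ p.2 ∈ ker' (vlist j) ∧ p.1 + p.2 = g :=
    fun j => tile_of _ (himg j)
  constructor
  · refine ⟨vlist, hperm, fun j => tiles j, ?_⟩
    intro u hu hu0
    have hu' : u ∈ K' - K' := hu
    obtain ⟨a, ha, b, hb, rfl⟩ := Finset.mem_sub.mp hu'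
    obtain ⟨j, c, hc⟩ := hKK' a ha b hb
    refine ⟨j, ?_⟩
    show (∑ x ∈ ker' (vlist j),
        Complex.exp (2 * π * Complex.I * (((∑ i, (a - b) i * x i : ZMod 6)).val : ℂ) / 6)) ≠ 0
    have h1 : ∀ x ∈ ker' (vlist j), (∑ i, (a - b) i * x i : ZMod 6) = 0 := by
      intro x hx
      simp only [ker', Finset.mem_filter, Finset.mem_univ, true_and] at hx
      calc (∑ i, (a - b) i * x i : ZMod 6) = ∑ i, c * (vlist j i * x i) := by
            refine Finset.sum_congr rfl fun i _ => ?_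
            rw [show (a - b) i = a i - b i from rfl, hc i, mul_assoc]
        _ = c * ∑ i, vlist j i * x i := (Finset.mul_sum _ _ _).symm
        _ = 0 := by rw [hx, mul_zero]
    have h2 : ∀ x ∈ ker' (vlist j),
        Complex.exp (2 * π * Complex.I * (((∑ i, (a - b) i * x i : ZMod 6)).val : ℂ) / 6) = 1 := by
      intro x hx
      rw [h1 x hx, ZMod.val_zero]
      norm_num
    rw [Finset.sum_congr rfl h2, Finset.sum_const, nsmul_eq_mul, mul_one]
    exact Nat.cast_ne_zero.mpr (Finset.card_ne_zero_of_mem (zero_mem_ker (vlist j)))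
  · rintro ⟨L, hL⟩
    choose U hU using char_eq
    have Uinj : Function.Injective U := by
      intro p q hpq
      apply DFunLike.ext
      intro x
      rw [hU p x, hU q x, hpq]
    set D : Finset G6 := L.image U with hD
    have hsum0 : ∀ (j : Fin 15) (lam mu : AddChar G6 ℂ) (c : ZMod 6),
        (∀ i, U lam i - U mu i = c * vlist j i) →
        ∑ x ∈ ker' (vlist j), (lam * mu⁻¹) x = ((ker' (vlist j)).card : ℂ) := by
      intro j lam mu c hc
      have h1 : ∀ x ∈ ker' (vlist j), (lam * mu⁻¹) x = 1 := by
        intro x hx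
        simp only [ker', Finset.mem_filter, Finset.mem_univ, true_and] at hx
        have hAB : (∑ i, U lam i * x i) + (∑ i, U mu i * (-x) i) = 0 := by
          have hterm : ∀ i : Fin 5, U lam i * x i + U mu i * (-x) i = c * (vlist j i * x i) := by
            intro i
            have h := hc i
            simp only [Pi.neg_apply, mul_neg]
            linear_combination x i * h
          rw [← Finset.sum_add_distrib, Finset.sum_congr rfl fun i _ => hterm i,
            ← Finset.mul_sum, hx, mul_zero]
        rw [AddChar.mul_apply, AddChar.inv_apply, hU lam x, hU mu (-x), ← e6_add, hAB, e6_zero]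
      rw [Finset.sum_congr rfl h1, Finset.sum_const, nsmul_eq_mul, mul_one]
    have keyinj : ∀ p ∈ D ×ˢ K', ∀ q ∈ D ×ˢ K', p.1 + p.2 = q.1 + q.2 → p = q := by
      rintro ⟨d, k⟩ hp ⟨d', k'⟩ hq hsum
      rw [Finset.mem_product] at hp hq
      obtain ⟨hd, hk⟩ := hp
      obtain ⟨hd', hk'⟩ := hq
      simp only at hsum
      by_cases hdd : d = d'
      · subst hdd
        have hkk : k = k' := add_left_cancel hsum
        rw [hkk]
      · exfalso
        obtain ⟨lam, hlam, rfl⟩ := Finset.mem_image.mp hd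
        obtain ⟨mu, hmu, rfl⟩ := Finset.mem_image.mp hd'
        have hne : lam ≠ mu := fun h => hdd (by rw [h])
        obtain ⟨j, c, hc⟩ := hKK' k' hk' k hk
        have hc' : ∀ i, U lam i - U mu i = c * vlist j i := by
          intro i
          have h := congrFun hsum i
          simp only [Pi.add_apply] at h
          rw [← hc i]
          linear_combination h
        have h0 := (hL (ker' (vlist j)) (tiles j)).2 lam hlam mu hmu hne
        rw [hsum0 j lam mu c hc'] at h0
        exact Nat.cast_ne_zero.mpr (Finset.card_ne_zero_of_mem (zero_mem_ker (vlist j))) h0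
    have hGcard : Fintype.card G6 = 7776 := by simp [Fintype.card_fun]
    have hDcard : D.card = L.card := Finset.card_image_of_injective L Uinj
    have hL0 : L.card = (ker' (vlist 0)).card := (hL (ker' (vlist 0)) (tiles 0)).1
    have hT0 : 6 * (ker' (vlist 0)).card = 7776 := card_of_tile _ (tiles 0)
    have hDK : (D ×ˢ K').card = 7776 := by
      rw [Finset.card_product, hDcard, hL0, hKcard]
      omega
    have himage : (D ×ˢ K').image (fun p => p.1 + p.2) = Finset.univ := by
      apply Finset.eq_univ_of_card
      rw [Finset.card_image_of_injOn
        (fun p hp q hq h => keyinj p (by simpa using hp) q (by simpa using hq) h), hDK, hGcard]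
    set H : Finset G6 := Finset.univ.filter (fun x => ∀ i, par (x i) = 0) with hH
    have hHcard : H.card = 243 := by
      have hHp : H = Fintype.piFinset (fun _ : Fin 5 => Finset.univ.filter fun a : ZMod 6 => par a = 0) := by
        ext x
        simp [hH, Fintype.mem_piFinset]
      rw [hHp, Fintype.card_piFinset]
      simp [par_fiber]
    set D0 : Finset G6 := D.filter (fun d => ∀ i, par (d i) = 0) with hD0
    have hbij : (D0 ×ˢ K').card = H.card := by
      refine Finset.card_bij (fun p _ => p.1 + p.2) ?_ ?_ ?_
      · rintro ⟨d, k⟩ hp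
        rw [Finset.mem_product, hD0, Finset.mem_filter] at hp
        simp only [hH, Finset.mem_filter, Finset.mem_univ, true_and]
        intro i
        show par (d i + k i) = 0
        rw [par_add, hp.1.2 i, hKpar k hp.2 i, add_zero]
      · intro p hp q hq h
        rw [Finset.mem_product, hD0, Finset.mem_filter] at hp hq
        exact keyinj p (Finset.mem_product.mpr ⟨hp.1.1, hp.2⟩) q
          (Finset.mem_product.mpr ⟨hq.1.1, hq.2⟩) h
      · intro h hh
        have hmem : h ∈ (D ×ˢ K').image (fun p => p.1 + p.2) := by
          rw [himage]; exact Finset.mem_univ _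
        obtain ⟨p, hp, hph⟩ := Finset.mem_image.mp hmem
        rw [Finset.mem_product] at hp
        refine ⟨p, ?_, hph⟩
        rw [Finset.mem_product, hD0, Finset.mem_filter]
        refine ⟨⟨hp.1, fun i => ?_⟩, hp.2⟩
        simp only [hH, Finset.mem_filter, Finset.mem_univ, true_and] at hh
        have h1 : par (h i) = 0 := hh i
        rw [← hph] at h1
        show par (p.1 i) = 0
        have h2 : par (p.1 i + p.2 i) = 0 := h1
        rw [par_add, hKpar p.2 hp.2 i, add_zero] at h2
        exact h2
    rw [Finset.card_product, hKcard, hHcard] at hbij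
    omega
end

section
/- Let G₂ = (ℤ/6)⁵ × (ℤ/15), let T₀,...,T₁₄ ⊆ (ℤ/6)⁵ be the subgroup tiling complements of E from the universal spectrum counterexample, and let Γ = ⋃_{j=0}^{14} ((0,0,0,0,0,j) + T̃_j), where T̃_j = T_j × {0}. Then Γ tiles G₂ by translation (with tiling complement Ẽ = E × {0}) but Γ is not a spectral set in G₂. -/
open scoped BigOperators Pointwise
open Complex Real

namespace Stmt15Aux

noncomputable def zN (N : ℕ) : ℂ := Complex.exp (2 * Real.pi * Complex.I / N)

lemma zN_prim (N : ℕ) [NeZero N] : IsPrimitiveRoot (zN N) N :=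
  Complex.isPrimitiveRoot_exp N (NeZero.ne N)

lemma zN_pow_N (N : ℕ) [NeZero N] : zN N ^ N = 1 := (zN_prim N).pow_eq_one

lemma zN_ne_zero (N : ℕ) : zN N ≠ 0 := Complex.exp_ne_zero _

noncomputable def eN (N : ℕ) (c : ZMod N) : ℂ := zN N ^ c.val

lemma eN_natCast (N : ℕ) [NeZero N] (n : ℕ) : eN N (n : ZMod N) = zN N ^ n := by
  rw [eN, ZMod.val_natCast]
  conv_rhs => rw [← Nat.mod_add_div n N, pow_add, pow_mul, zN_pow_N, one_pow, mul_one]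

lemma eN_add (N : ℕ) [NeZero N] (a b : ZMod N) : eN N (a + b) = eN N a * eN N b := by
  have h : ((a.val + b.val : ℕ) : ZMod N) = a + b := by push_cast [ZMod.natCast_val, ZMod.cast_id]; ring
  rw [← h, eN_natCast, pow_add, eN, eN]

lemma eN_zero (N : ℕ) [NeZero N] : eN N 0 = 1 := by
  rw [eN, ZMod.val_zero, pow_zero]

lemma eN_ne_zero (N : ℕ) (c : ZMod N) : eN N c ≠ 0 := pow_ne_zero _ (zN_ne_zero N)

lemma eN_eq_one_iff (N : ℕ) [NeZero N] (c : ZMod N) : eN N c = 1 ↔ c = 0 := by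
  rw [eN, (zN_prim N).pow_eq_one_iff_dvd]
  constructor
  · intro h
    have hlt : c.val < N := ZMod.val_lt c
    have h0 : c.val = 0 := by
      rcases Nat.eq_zero_or_pos c.val with h0 | h0
      · exact h0
      · exact absurd (Nat.le_of_dvd h0 h) (not_le.mpr hlt)
    exact (ZMod.val_eq_zero c).mp h0
  · rintro rfl; simp [ZMod.val_zero]

lemma eN_sub (N : ℕ) [NeZero N] (a b : ZMod N) : eN N (a - b) = eN N a * (eN N b)⁻¹ := by
  have := eN_add N (a - b) b
  rw [sub_add_cancel] at this
  field_simp [eN_ne_zero] at this ⊢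
  rw [this]

open Classical in
noncomputable def dlog (N : ℕ) (z : ℂ) : ZMod N :=
  if h : ∃ c : ZMod N, eN N c = z then h.choose else 0

lemma eN_dlog (N : ℕ) [NeZero N] {z : ℂ} (hz : z ^ N = 1) : eN N (dlog N z) = z := by
  have h : ∃ c : ZMod N, eN N c = z := by
    obtain ⟨i, hi, hiz⟩ := (zN_prim N).eq_pow_of_pow_eq_one hz
    exact ⟨(i : ZMod N), by rw [eN_natCast, hiz]⟩
  rw [dlog]
  split
  · next h2 => exact h2.choose_spec
  · next h2 => exact absurd h h2


abbrev V := Fin 5 → ZMod 6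
abbrev G := V × ZMod 15

def ip (u x : V) : ZMod 6 := ∑ i, u i * x i

lemma ip_add_right (u x y : V) : ip u (x + y) = ip u x + ip u y := by
  simp [ip, mul_add, Finset.sum_add_distrib]

lemma ip_sub_right (u x y : V) : ip u (x - y) = ip u x - ip u y := by
  simp [ip, mul_sub, Finset.sum_sub_distrib]

lemma ip_sub_left (u w x : V) : ip (u - w) x = ip u x - ip w x := by
  simp [ip, sub_mul, Finset.sum_sub_distrib]

lemma ip_neg_right (u x : V) : ip u (-x) = - ip u x := by
  simp [ip]

lemma ip_single (u : V) (i : Fin 5) (c : ZMod 6) : ip u (Pi.single i c) = u i * c := by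
  rw [ip, Finset.sum_eq_single i]
  · rw [Pi.single_eq_same]
  · intro b _ hb; rw [Pi.single_eq_of_ne hb, mul_zero]
  · intro h; exact absurd (Finset.mem_univ i) h

lemma ip_zero_right (u : V) : ip u 0 = 0 := by simp [ip]

lemma addchar_map_sum {A M : Type*} [AddCommMonoid A] [CommMonoid M] (χ : AddChar A M)
    {ι : Type*} (s : Finset ι) (f : ι → A) : χ (∑ i ∈ s, f i) = ∏ i ∈ s, χ (f i) := by
  induction s using Finset.cons_induction with
  | empty => simp
  | cons a s ha ih => rw [Finset.sum_cons, Finset.prod_cons, AddChar.map_add_eq_mul, ih]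


noncomputable def xi (χ : AddChar G ℂ) : V := fun i => dlog 6 (χ (Pi.single i 1, 0))

noncomputable def mv (χ : AddChar G ℂ) : ZMod 15 := dlog 15 (χ ((0 : V), (1 : ZMod 15)))

lemma char_single (χ : AddChar G ℂ) (i : Fin 5) :
    χ (Pi.single i 1, 0) = eN 6 (xi χ i) := by
  refine (eN_dlog 6 ?_).symm
  rw [← AddChar.map_nsmul_eq_pow]
  have h : (6 : ℕ) • ((Pi.single i 1 : V), (0 : ZMod 15)) = 0 := by
    ext j
    · simp only [Prod.smul_fst, Pi.smul_apply, Pi.single_apply]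
      split <;> simp <;> decide
    · simp
  rw [h, AddChar.map_zero_eq_one]

lemma char_mv (χ : AddChar G ℂ) : χ ((0 : V), (1 : ZMod 15)) = eN 15 (mv χ) := by
  refine (eN_dlog 15 ?_).symm
  rw [← AddChar.map_nsmul_eq_pow]
  have h : (15 : ℕ) • ((0 : V), (1 : ZMod 15)) = 0 := by
    ext j
    · simp
    · show (15 : ℕ) • (1 : ZMod 15) = 0
      decide
  rw [h, AddChar.map_zero_eq_one]

lemma single_eq_smul (i : Fin 5) (c : ZMod 6) :
    ((Pi.single i c : V), (0 : ZMod 15)) = c.val • ((Pi.single i 1 : V), (0 : ZMod 15)) := by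
  have h1 : (Pi.single i c : V) = c.val • (Pi.single i 1 : V) := by
    rw [← Pi.single_smul]
    congr 1
    · rw [nsmul_eq_mul, mul_one, ZMod.natCast_val, ZMod.cast_id]
  rw [Prod.ext_iff]
  exact ⟨by simp [h1], by simp⟩

lemma char_fst (χ : AddChar G ℂ) (x : V) : χ (x, 0) = eN 6 (ip (xi χ) x) := by
  have hx : ((x, 0) : G) = ∑ i : Fin 5, ((Pi.single i (x i) : V), (0 : ZMod 15)) := by
    rw [Prod.ext_iff]
    constructor
    · rw [Prod.fst_sum]
      exact (Finset.univ_sum_single x).symm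
    · rw [Prod.snd_sum]
      simp
  rw [hx, addchar_map_sum]
  have h2 : ∀ i : Fin 5, χ ((Pi.single i (x i) : V), (0 : ZMod 15))
      = zN 6 ^ ((xi χ i).val * (x i).val) := by
    intro i
    rw [single_eq_smul, AddChar.map_nsmul_eq_pow, char_single, eN, ← pow_mul]
  rw [Finset.prod_congr rfl (fun i _ => h2 i), Finset.prod_pow_eq_pow_sum]
  have h3 : ((∑ i : Fin 5, (xi χ i).val * (x i).val : ℕ) : ZMod 6) = ip (xi χ) x := by
    push_cast [ZMod.natCast_val, ZMod.cast_id]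
    rfl
  rw [← h3, eN_natCast]

lemma char_snd (χ : AddChar G ℂ) (b : ZMod 15) : χ ((0 : V), b) = eN 15 (mv χ * b) := by
  have hb : ((0 : V), b) = b.val • ((0 : V), (1 : ZMod 15)) := by
    rw [Prod.ext_iff]
    refine ⟨by simp, ?_⟩
    simp only [Prod.smul_snd]
    rw [nsmul_eq_mul, mul_one, ZMod.natCast_val, ZMod.cast_id]
  rw [hb, AddChar.map_nsmul_eq_pow, char_mv, eN, ← pow_mul]
  have h3 : (((mv χ).val * b.val : ℕ) : ZMod 15) = mv χ * b := by
    push_cast [ZMod.natCast_val, ZMod.cast_id]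
    ring
  rw [← h3, eN_natCast]

lemma char_split (χ : AddChar G ℂ) (x : V) (b : ZMod 15) :
    χ (x, b) = eN 6 (ip (xi χ) x) * eN 15 (mv χ * b) := by
  have : ((x, b) : G) = (x, 0) + (0, b) := by simp
  rw [this, AddChar.map_add_eq_mul, char_fst, char_snd]

lemma char_ext {lam mu : AddChar G ℂ} (h1 : xi lam = xi mu) (h2 : mv lam = mv mu) :
    lam = mu := by
  apply DFunLike.ext
  rintro ⟨x, b⟩
  rw [char_split, char_split, h1, h2]

def Tf (w : V) : Finset V := Finset.univ.filter fun x => ∑ i, w i * x i = 0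

lemma mem_Tf {w x : V} : x ∈ Tf w ↔ ip w x = 0 := by
  simp [Tf, ip]

lemma card_univ_V : (Finset.univ : Finset V).card = 7776 := by
  rw [Finset.card_univ]
  simp [Fintype.card_fun]

lemma card_Tf {w : V} {i₀ : Fin 5} (h : w i₀ = 1) : (Tf w).card = 1296 := by
  have hfib : ∀ c : ZMod 6,
      (Finset.univ.filter fun x : V => ip w x = c).card = (Tf w).card := by
    intro c
    refine Finset.card_bij' (fun x _ => x - Pi.single i₀ c) (fun x _ => x + Pi.single i₀ c)
      ?_ ?_ ?_ ?_
    · intro a ha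
      rw [Finset.mem_filter] at ha
      rw [mem_Tf, ip_sub_right, ha.2, ip_single, h, one_mul, sub_self]
    · intro a ha
      rw [mem_Tf] at ha
      rw [Finset.mem_filter]
      refine ⟨Finset.mem_univ _, ?_⟩
      rw [ip_add_right, ha, ip_single, h, one_mul, zero_add]
    · intro a _; show a - _ + _ = a; rw [sub_add_cancel]
    · intro a _; show a + _ - _ = a; rw [add_sub_cancel_right]
  have hsum := Finset.card_eq_sum_card_fiberwise
    (f := fun x : V => ip w x) (s := Finset.univ) (t := Finset.univ)
    (fun x _ => Finset.mem_univ _)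
  rw [card_univ_V] at hsum
  rw [Finset.sum_congr rfl (fun c _ => hfib c), Finset.sum_const] at hsum
  simp only [Finset.card_univ, smul_eq_mul] at hsum
  have : Fintype.card (ZMod 6) = 6 := by simp
  rw [this] at hsum
  omega

noncomputable def Sval (w u : V) : ℂ := ∑ x ∈ Tf w, eN 6 (ip u x)

lemma Sval_eq_card {w u : V} (h : ∀ t ∈ Tf w, ip u t = 0) :
    Sval w u = ((Tf w).card : ℂ) := by
  rw [Sval, Finset.sum_congr rfl (fun t ht => by rw [h t ht, eN_zero]), Finset.sum_const]
  simp

lemma Sval_zero {w u : V} {t₁ : V} (ht₁ : t₁ ∈ Tf w) (hc : ip u t₁ ≠ 0) :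
    Sval w u = 0 := by
  have key : Sval w u = eN 6 (ip u t₁) * Sval w u := by
    have key2 : Sval w u = ∑ x ∈ Tf w, eN 6 (ip u (x + t₁)) := by
      rw [Sval]
      refine Finset.sum_bij' (fun x _ => x - t₁) (fun x _ => x + t₁) ?_ ?_ ?_ ?_ ?_
      · intro a ha
        rw [mem_Tf] at ha ⊢
        rw [ip_sub_right, ha, zero_sub, mem_Tf.mp ht₁, neg_zero]
      · intro a ha
        rw [mem_Tf] at ha ⊢
        rw [ip_add_right, ha, zero_add]
        exact mem_Tf.mp ht₁
      · intro a _; show a - _ + _ = a; rw [sub_add_cancel]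
      · intro a _; show a + _ - _ = a; rw [add_sub_cancel_right]
      · intro a _; show eN 6 (ip u a) = eN 6 (ip u (a - t₁ + t₁)); rw [sub_add_cancel]
    calc Sval w u = ∑ x ∈ Tf w, eN 6 (ip u (x + t₁)) := key2
      _ = ∑ x ∈ Tf w, eN 6 (ip u t₁) * eN 6 (ip u x) := by
            apply Finset.sum_congr rfl
            intro x _
            rw [ip_add_right, eN_add]
            ring
      _ = eN 6 (ip u t₁) * Sval w u := by rw [Sval, Finset.mul_sum]
  have h1 : (1 - eN 6 (ip u t₁)) * Sval w u = 0 := by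
    rw [sub_mul, one_mul, ← key, sub_self]
  rcases mul_eq_zero.mp h1 with h2 | h2
  · exfalso
    apply hc
    have : eN 6 (ip u t₁) = 1 := by
      have := sub_eq_zero.mp h2
      exact this.symm
    exact (eN_eq_one_iff 6 _).mp this
  · exact h2

lemma Sval_dichotomy (w u : V) {i₀ : Fin 5} (h : w i₀ = 1) :
    Sval w u = 0 ∨ Sval w u = 1296 := by
  by_cases hall : ∀ t ∈ Tf w, ip u t = 0
  · right
    rw [Sval_eq_card hall, card_Tf h]
    norm_num
  · left
    push_neg at hall
    obtain ⟨t₁, ht₁, hc⟩ := hall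
    exact Sval_zero ht₁ hc

lemma mul_inv_apply (lam mu : AddChar G ℂ) (t : V) (b : ZMod 15) :
    (lam * mu⁻¹) (t, b) = eN 6 (ip (xi lam - xi mu) t) * eN 15 ((mv lam - mv mu) * b) := by
  rw [AddChar.mul_apply, AddChar.inv_apply]
  have hneg : (-((t, b) : G)) = ((-t, -b) : G) := rfl
  rw [hneg, char_split, char_split]
  rw [ip_neg_right, ip_sub_left]
  have h1 : (mv mu) * (-b) = -(mv mu * b) := by ring
  rw [h1]
  rw [sub_eq_add_neg (ip (xi lam) t), eN_add]
  rw [sub_mul, sub_eq_add_neg (mv lam * b), eN_add]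
  ring

lemma eN_exp (c : ZMod 6) :
    Complex.exp (2 * Real.pi * Complex.I * (c.val : ℂ) / 6) = eN 6 c := by
  rw [eN, zN, ← Complex.exp_nat_mul]
  congr 1
  push_cast
  ring

end Stmt15Aux

open Stmt15Aux in
/-- Proposition `fug`: In `G₂ = (ℤ/6)⁵ × ℤ/15`, with `T₀,…,T₁₄` the
subgroup tiling complements of `E` from the universal-spectrum counterexample (kernels of
coordinate permutations `v_j` of `(1,2,3,4,5)` chosen so that `⋂_j Z(χ̂_{T_j})` meets
`K - K` only in `0`), the set `Γ = ⋃_j ((0,j) + T_j × {0})` tiles `G₂` (with tiling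
complement `Ẽ = E × {0}`) but `Γ` is not spectral in `G₂`. -/
theorem stmt15
    (v : Fin 15 → (Fin 5 → ZMod 6))
    (hperm : ∀ j, ∃ σ : Equiv.Perm (Fin 5), v j = ![1,2,3,4,5] ∘ σ)
    (hK : ∀ u ∈ ({![0,0,0,0,0], ![0,2,2,4,4], ![2,0,4,4,2], ![2,4,0,2,4],
            ![4,4,2,0,2], ![4,2,4,2,0]} : Finset (Fin 5 → ZMod 6)) -
          ({![0,0,0,0,0], ![0,2,2,4,4], ![2,0,4,4,2], ![2,4,0,2,4],
            ![4,4,2,0,2], ![4,2,4,2,0]} : Finset (Fin 5 → ZMod 6)), u ≠ 0 →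
        ∃ j : Fin 15,
          ∑ x ∈ (Finset.univ.filter fun x : Fin 5 → ZMod 6 => ∑ i, v j i * x i = 0),
            Complex.exp (2 * π * Complex.I * ((∑ i, u i * x i : ZMod 6).val : ℂ) / 6) ≠ 0) :
    let G₂ := (Fin 5 → ZMod 6) × ZMod 15
    let T : Fin 15 → Finset (Fin 5 → ZMod 6) :=
      fun j => Finset.univ.filter fun x => ∑ i, v j i * x i = 0
    let Γ : Finset G₂ :=
      Finset.univ.biUnion fun j : Fin 15 => (T j).image fun t => (t, (j : ZMod 15))
    let Etilde : Finset G₂ :=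
      (insert 0 (Finset.univ.image fun j : Fin 5 => Pi.single j 1)).image
        fun x => (x, (0 : ZMod 15))
    (∀ g : G₂, ∃! p : G₂ × G₂, p.1 ∈ Γ ∧ p.2 ∈ Etilde ∧ p.1 + p.2 = g) ∧
    ¬ ∃ Λ : Finset (AddChar G₂ ℂ),
        Λ.card = Γ.card ∧
        ∀ lam ∈ Λ, ∀ mu ∈ Λ, lam ≠ mu → ∑ x ∈ Γ, (lam * mu⁻¹) x = 0 := by
  intro G₂ T T' Etilde
  -- basic decidable facts about ![1,2,3,4,5]
  have dne : ∀ k : Fin 5, (![1,2,3,4,5] : Fin 5 → ZMod 6) k ≠ 0 := by decide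
  have dinj : ∀ k l : Fin 5, (![1,2,3,4,5] : Fin 5 → ZMod 6) k = ![1,2,3,4,5] l → k = l := by
    decide
  have dsurj : ∀ c : ZMod 6, c ≠ 0 → ∃ k : Fin 5, (![1,2,3,4,5] : Fin 5 → ZMod 6) k = c := by
    decide
  have hpiv : ∀ j : Fin 15, ∃ i₀ : Fin 5, v j i₀ = 1 := by
    intro j
    obtain ⟨σ, hσ⟩ := hperm j
    refine ⟨σ.symm 0, ?_⟩
    rw [hσ]
    simp only [Function.comp_apply, Equiv.apply_symm_apply]
    rfl
  have hTf : ∀ j : Fin 15, T j = Tf (v j) := fun j => rfl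
  have cardT : ∀ j : Fin 15, (T j).card = 1296 := by
    intro j
    obtain ⟨i₀, h⟩ := hpiv j
    rw [hTf j]
    exact card_Tf h
  constructor
  · -- tiling
    rintro ⟨a, b⟩
    set j₀ : Fin 15 := ⟨b.val, ZMod.val_lt b⟩ with hj₀
    obtain ⟨σ, hσ⟩ := hperm j₀
    have vne : ∀ i, v j₀ i ≠ 0 := fun i => by rw [hσ]; exact dne (σ i)
    have vinj : ∀ i i', v j₀ i = v j₀ i' → i = i' := by
      intro i i' h
      rw [hσ] at h
      exact σ.injective (dinj _ _ h)
    have vsurj : ∀ c : ZMod 6, c ≠ 0 → ∃ i, v j₀ i = c := by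
      intro c hc
      obtain ⟨k, hk⟩ := dsurj c hc
      exact ⟨σ.symm k, by rw [hσ]; simpa using hk⟩
    set E : Finset (Fin 5 → ZMod 6) :=
      insert 0 (Finset.univ.image fun j : Fin 5 => Pi.single j 1) with hE
    have hipE : ∀ x ∈ E, ∀ y ∈ E, ip (v j₀) x = ip (v j₀) y → x = y := by
      intro x hx y hy hxy
      rw [hE, Finset.mem_insert, Finset.mem_image] at hx hy
      rcases hx with rfl | ⟨i, _, rfl⟩ <;> rcases hy with rfl | ⟨i', _, rfl⟩
      · rfl
      · exfalso
        rw [ip_zero_right, ip_single, mul_one] at hxy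
        exact vne i' hxy.symm
      · exfalso
        rw [ip_zero_right, ip_single, mul_one] at hxy
        exact vne i hxy
      · rw [ip_single, ip_single, mul_one, mul_one] at hxy
        rw [vinj _ _ hxy]
    have hex : ∃ e ∈ E, ip (v j₀) e = ip (v j₀) a := by
      by_cases hc : ip (v j₀) a = 0
      · exact ⟨0, Finset.mem_insert_self _ _, by rw [ip_zero_right, hc]⟩
      · obtain ⟨i, hi⟩ := vsurj _ hc
        refine ⟨Pi.single i 1, ?_, ?_⟩
        · rw [hE]
          exact Finset.mem_insert_of_mem
            (Finset.mem_image.mpr ⟨i, Finset.mem_univ _, rfl⟩)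
        · rw [ip_single, mul_one, hi]
    obtain ⟨e, heE, heip⟩ := hex
    refine ⟨((a - e, (j₀ : ZMod 15)), (e, 0)), ⟨?_, ?_, ?_⟩, ?_⟩
    · -- membership in Γ
      apply Finset.mem_biUnion.mpr
      refine ⟨j₀, Finset.mem_univ _, Finset.mem_image.mpr ⟨a - e, ?_, rfl⟩⟩
      rw [hTf, mem_Tf, ip_sub_right, heip, sub_self]
    · exact Finset.mem_image.mpr ⟨e, heE, rfl⟩
    · show (a - e + e, (j₀ : ZMod 15) + 0) = (a, b)
      rw [sub_add_cancel, add_zero]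
      rfl
    · rintro ⟨p1, p2⟩ ⟨hp1, hp2, hsum⟩
      obtain ⟨x, hxE, hp2eq⟩ := Finset.mem_image.mp hp2
      obtain ⟨j', _, himg⟩ := Finset.mem_biUnion.mp hp1
      obtain ⟨t, htT, hp1eq⟩ := Finset.mem_image.mp himg
      subst hp2eq
      subst hp1eq
      have hsum1 : t + x = a := congrArg Prod.fst hsum
      have hsum2 : (j' : ZMod 15) + 0 = b := congrArg Prod.snd hsum
      have hj' : j' = j₀ := by
        rw [add_zero] at hsum2
        exact hsum2
      subst hj'
      have hxe : x = e := by
        apply hipE x hxE e heE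
        rw [hTf, mem_Tf] at htT
        have h5 : ip (v j₀) (t + x) = ip (v j₀) a := by rw [hsum1]
        rw [ip_add_right, htT, zero_add] at h5
        rw [h5, heip]
      have hte : t = a - e := by
        rw [eq_sub_iff_add_eq, ← hxe]
        exact hsum1
      rw [hxe, hte]
  · rintro ⟨Λ, hcard, horth⟩
    classical
    have hdisj1 : Set.PairwiseDisjoint (↑(Finset.univ : Finset (Fin 15)))
        (fun j : Fin 15 => ((T j).image fun t => (t, (j : ZMod 15)) : Finset G₂)) := by
      intro j _ k _ hjk
      rw [Function.onFun, Finset.disjoint_left]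
      rintro ⟨t, m⟩ hj hk
      obtain ⟨t1, _, h1⟩ := Finset.mem_image.mp hj
      obtain ⟨t2, _, h2⟩ := Finset.mem_image.mp hk
      apply hjk
      have e1 := congrArg Prod.snd h1
      have e2 := congrArg Prod.snd h2
      exact e1.trans e2.symm
    have cardΓ : T'.card = 19440 := by
      have h0 : T'.card = ∑ j : Fin 15, ((T j).image fun t => (t, (j : ZMod 15))).card :=
        Finset.card_biUnion fun j _ k _ h => hdisj1 (Finset.mem_coe.mpr (Finset.mem_univ j))
          (Finset.mem_coe.mpr (Finset.mem_univ k)) h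
      rw [h0]
      have himg : ∀ j : Fin 15, ((T j).image fun t => (t, (j : ZMod 15))).card = 1296 := by
        intro j
        rw [Finset.card_image_of_injective _ (fun x y h => congrArg Prod.fst h)]
        exact cardT j
      rw [Finset.sum_congr rfl fun j _ => himg j, Finset.sum_const, Finset.card_univ,
        Fintype.card_fin, smul_eq_mul]
    have factA : ∀ lam ∈ Λ, ∀ mu ∈ Λ, lam ≠ mu → mv lam = mv mu →
        ∀ j : Fin 15, Sval (v j) (xi lam - xi mu) = 0 := by
      intro lam hlam mu hmu hne hmv
      have horth' := horth lam hlam mu hmu hne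
      have hdecomp : ∑ x ∈ (Finset.univ.biUnion fun j : Fin 15 =>
            ((T j).image fun t => (t, (j : ZMod 15)) : Finset G₂)), (lam * mu⁻¹) x
          = ∑ j : Fin 15, Sval (v j) (xi lam - xi mu) := by
        rw [Finset.sum_biUnion hdisj1]
        apply Finset.sum_congr rfl
        intro j _
        rw [Finset.sum_image (fun t _ u _ h => congrArg Prod.fst h)]
        rw [Sval]
        apply Finset.sum_congr (hTf j)
        intro t _
        refine (mul_inv_apply lam mu t (j : ZMod 15)).trans ?_
        have hz : ∀ b : ZMod 15, (0 : ZMod 15) * b = 0 := fun b => zero_mul b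
        rw [hmv, sub_self, hz j, eN_zero, mul_one]
      replace horth' : ∑ j : Fin 15, Sval (v j) (xi lam - xi mu) = 0 := by
        rw [← hdecomp]
        exact horth'
      have hdich : ∀ j : Fin 15,
          Sval (v j) (xi lam - xi mu) = 0 ∨ Sval (v j) (xi lam - xi mu) = 1296 := by
        intro j
        obtain ⟨i₁, h⟩ := hpiv j
        exact Sval_dichotomy _ _ h
      set s := Finset.univ.filter
        (fun j : Fin 15 => Sval (v j) (xi lam - xi mu) ≠ 0) with hs
      have hsum2 : ∑ j : Fin 15, Sval (v j) (xi lam - xi mu) = (s.card : ℂ) * 1296 := by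
        rw [← Finset.sum_filter_add_sum_filter_not Finset.univ
          (fun j => Sval (v j) (xi lam - xi mu) ≠ 0)]
        have hA : ∑ j ∈ s, Sval (v j) (xi lam - xi mu) = (s.card : ℂ) * 1296 := by
          rw [Finset.sum_congr rfl
            (fun j hj => (hdich j).resolve_left (Finset.mem_filter.mp hj).2),
            Finset.sum_const, nsmul_eq_mul]
        have hB : ∑ j ∈ Finset.univ.filter
            (fun j : Fin 15 => ¬ Sval (v j) (xi lam - xi mu) ≠ 0),
            Sval (v j) (xi lam - xi mu) = 0 := by
          apply Finset.sum_eq_zero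
          intro j hj
          exact not_not.mp (Finset.mem_filter.mp hj).2
        rw [hA, hB, add_zero]
      rw [hsum2] at horth'
      have hscard : s.card = 0 := by
        rcases mul_eq_zero.mp horth' with h | h
        · exact_mod_cast h
        · norm_num at h
      have hsempty : s = ∅ := Finset.card_eq_zero.mp hscard
      intro j
      by_contra hj
      have : j ∈ s := Finset.mem_filter.mpr ⟨Finset.mem_univ _, hj⟩
      rw [hsempty] at this
      exact absurd this (Finset.notMem_empty j)
    obtain ⟨i₀, hi₀⟩ := hpiv 0
    have fibbound : ∀ m : ZMod 15, (Λ.filter fun χ => mv χ = m).card ≤ 1296 := by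
      intro m
      have htarget : (Finset.univ : Finset (Fin 4 → ZMod 6)).card = 1296 := by
        rw [Finset.card_univ]
        simp only [Fintype.card_fun, Fintype.card_fin]
        norm_num [ZMod.card]
      rw [← htarget]
      apply Finset.card_le_card_of_injOn
        (f := fun χ => fun k : Fin 4 => xi χ (i₀.succAbove k) - xi χ i₀ * v 0 (i₀.succAbove k))
      · intro χ _
        exact Finset.mem_univ _
      · intro lam hlam mu hmu heq
        rw [Finset.mem_coe, Finset.mem_filter] at hlam hmu
        have hmv : mv lam = mv mu := hlam.2.trans hmu.2.symm
        by_contra hne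
        have hd : ∀ i, xi lam i - xi mu i = (xi lam i₀ - xi mu i₀) * v 0 i := by
          intro i
          rcases eq_or_ne i i₀ with rfl | hi
          · rw [hi₀, mul_one]
          · obtain ⟨k, hk⟩ := Fin.exists_succAbove_eq hi
            have h8 := congrFun heq k
            simp only at h8
            rw [← hk]
            linear_combination h8
        by_cases hc : xi lam i₀ - xi mu i₀ = 0
        · apply hne
          apply char_ext _ hmv
          funext i
          have h6 := hd i
          rw [hc, zero_mul] at h6
          exact sub_eq_zero.mp h6
        · have h0 := factA lam hlam.1 mu hmu.1 hne hmv 0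
          have hall : ∀ t ∈ Tf (v 0), ip (xi lam - xi mu) t = 0 := by
            intro t ht
            have h7 : ip (xi lam - xi mu) t = (xi lam i₀ - xi mu i₀) * ip (v 0) t := by
              rw [ip, ip, Finset.mul_sum]
              apply Finset.sum_congr rfl
              intro i _
              rw [Pi.sub_apply, hd i]
              ring
            rw [h7, mem_Tf.mp ht, mul_zero]
          rw [Sval_eq_card hall, card_Tf hi₀] at h0
          norm_num at h0
    have fibtotal : ∑ m : ZMod 15, (Λ.filter fun χ => mv χ = m).card = 19440 := by
      rw [← Finset.card_eq_sum_card_fiberwise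
        (f := fun χ => mv χ) (t := Finset.univ) (fun χ _ => Finset.mem_univ _)]
      rw [hcard, cardΓ]
    have fibeq : (Λ.filter fun χ => mv χ = 0).card = 1296 := by
      by_contra hm₀
      have hlt : (Λ.filter fun χ => mv χ = 0).card < 1296 :=
        lt_of_le_of_ne (fibbound 0) hm₀
      have hlt2 : ∑ m : ZMod 15, (Λ.filter fun χ => mv χ = m).card
          < ∑ _m : ZMod 15, 1296 :=
        Finset.sum_lt_sum (fun m _ => fibbound m) ⟨0, Finset.mem_univ _, hlt⟩
      rw [fibtotal, Finset.sum_const, Finset.card_univ, ZMod.card, smul_eq_mul] at hlt2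
      omega
    set C := Λ.filter (fun χ => mv χ = 0) with hC
    have hinjC : Set.InjOn xi ↑C := by
      intro lam hlam mu hmu heq
      rw [Finset.mem_coe, hC, Finset.mem_filter] at hlam hmu
      exact char_ext heq (hlam.2.trans hmu.2.symm)
    set B := C.image xi with hB
    have hBcard : B.card = 1296 := by
      rw [hB, Finset.card_image_of_injOn hinjC]
      exact fibeq
    have hBdiff : ∀ lam ∈ C, ∀ mu ∈ C, lam ≠ mu →
        xi lam - xi mu ∉
          (({![0,0,0,0,0], ![0,2,2,4,4], ![2,0,4,4,2], ![2,4,0,2,4],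
            ![4,4,2,0,2], ![4,2,4,2,0]} : Finset (Fin 5 → ZMod 6)) -
          ({![0,0,0,0,0], ![0,2,2,4,4], ![2,0,4,4,2], ![2,4,0,2,4],
            ![4,4,2,0,2], ![4,2,4,2,0]} : Finset (Fin 5 → ZMod 6))) := by
      intro lam hlam mu hmu hne hmem
      have hlam' := Finset.mem_filter.mp (hC ▸ hlam)
      have hmu' := Finset.mem_filter.mp (hC ▸ hmu)
      have hmv : mv lam = mv mu := hlam'.2.trans hmu'.2.symm
      have hne0 : xi lam - xi mu ≠ 0 := by
        intro h
        exact hne (char_ext (sub_eq_zero.mp h) hmv)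
      obtain ⟨j, hj⟩ := hK _ hmem hne0
      apply hj
      have hfa := factA lam hlam'.1 mu hmu'.1 hne hmv j
      rw [← hfa, Sval]
      apply Finset.sum_congr rfl
      intro x _
      exact eN_exp _
    have hprodinj : Set.InjOn (fun p : (Fin 5 → ZMod 6) × (Fin 5 → ZMod 6) => p.1 + p.2)
        ↑(B ×ˢ ({![0,0,0,0,0], ![0,2,2,4,4], ![2,0,4,4,2], ![2,4,0,2,4],
            ![4,4,2,0,2], ![4,2,4,2,0]} : Finset (Fin 5 → ZMod 6))) := by
      rintro ⟨b, k⟩ hp ⟨b', k'⟩ hq heq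
      simp only [Finset.coe_product, Set.mem_prod, Finset.mem_coe] at hp hq
      simp only at heq
      by_cases hbb : b = b'
      · subst hbb
        have : k = k' := by
          funext i
          have := congrFun heq i
          simpa using this
        rw [this]
      · exfalso
        obtain ⟨lam, hlamC, hxlam⟩ := Finset.mem_image.mp (hB ▸ hp.1)
        obtain ⟨mu, hmuC, hxmu⟩ := Finset.mem_image.mp (hB ▸ hq.1)
        have hnelm : lam ≠ mu := by
          intro h
          exact hbb (by rw [← hxlam, ← hxmu, h])
        apply hBdiff lam hlamC mu hmuC hnelm
        have hdd : xi lam - xi mu = k' - k := by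
          rw [hxlam, hxmu]
          have : b + k = b' + k' := heq
          funext i
          have h2 := congrFun this i
          simp only [Pi.add_apply, Pi.sub_apply] at h2 ⊢
          linear_combination h2
        rw [hdd]
        exact Finset.sub_mem_sub hq.2 hp.2
    have hcardprod : (B ×ˢ ({![0,0,0,0,0], ![0,2,2,4,4], ![2,0,4,4,2], ![2,4,0,2,4],
            ![4,4,2,0,2], ![4,2,4,2,0]} : Finset (Fin 5 → ZMod 6))).card = 7776 := by
      rw [Finset.card_product, hBcard]
      have : ({![0,0,0,0,0], ![0,2,2,4,4], ![2,0,4,4,2], ![2,4,0,2,4],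
            ![4,4,2,0,2], ![4,2,4,2,0]} : Finset (Fin 5 → ZMod 6)).card = 6 := by decide
      rw [this]
    have himgU : (B ×ˢ ({![0,0,0,0,0], ![0,2,2,4,4], ![2,0,4,4,2], ![2,4,0,2,4],
            ![4,4,2,0,2], ![4,2,4,2,0]} : Finset (Fin 5 → ZMod 6))).image
          (fun p => p.1 + p.2) = Finset.univ := by
      apply Finset.eq_univ_of_card
      rw [Finset.card_image_of_injOn hprodinj, hcardprod]
      simp only [Fintype.card_fun, Fintype.card_fin, ZMod.card]
      norm_num
    have hKt3 : ∀ k ∈ ({![0,0,0,0,0], ![0,2,2,4,4], ![2,0,4,4,2], ![2,4,0,2,4],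
            ![4,4,2,0,2], ![4,2,4,2,0]} : Finset (Fin 5 → ZMod 6)), ∀ i, 3 * k i = 0 := by
      intro k hk i
      simp only [Finset.mem_insert, Finset.mem_singleton] at hk
      rcases hk with rfl|rfl|rfl|rfl|rfl|rfl <;> fin_cases i <;> decide
    set Hf := Finset.univ.filter (fun x : Fin 5 → ZMod 6 => ∀ i, 3 * x i = 0) with hHf
    have hHfcard : Hf.card = 243 := by
      have hpi : Hf = Fintype.piFinset
          (fun _ : Fin 5 => Finset.univ.filter fun z : ZMod 6 => 3 * z = 0) := by
        ext x
        rw [hHf]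
        simp [Fintype.mem_piFinset]
      rw [hpi, Fintype.card_piFinset]
      have h3 : (Finset.univ.filter fun z : ZMod 6 => 3 * z = 0).card = 3 := by decide
      rw [Finset.prod_congr rfl (fun i _ => h3), Finset.prod_const, Finset.card_univ,
        Fintype.card_fin]
      norm_num
    set P := (B ×ˢ ({![0,0,0,0,0], ![0,2,2,4,4], ![2,0,4,4,2], ![2,4,0,2,4],
            ![4,4,2,0,2], ![4,2,4,2,0]} : Finset (Fin 5 → ZMod 6))).filter
        (fun p => p.1 + p.2 ∈ Hf) with hP
    have hPimg : P.image (fun p => p.1 + p.2) = Hf := by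
      ext h
      simp only [Finset.mem_image]
      constructor
      · rintro ⟨p, hp, rfl⟩
        exact (Finset.mem_filter.mp hp).2
      · intro hh
        have hmemU : h ∈ (B ×ˢ ({![0,0,0,0,0], ![0,2,2,4,4], ![2,0,4,4,2], ![2,4,0,2,4],
            ![4,4,2,0,2], ![4,2,4,2,0]} : Finset (Fin 5 → ZMod 6))).image
            (fun p => p.1 + p.2) := by
          rw [himgU]
          exact Finset.mem_univ _
        obtain ⟨p, hp, hpe⟩ := Finset.mem_image.mp hmemU
        exact ⟨p, Finset.mem_filter.mpr ⟨hp, by rw [hpe]; exact hh⟩, hpe⟩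
    have hPcard : P.card = 243 := by
      rw [← hHfcard, ← hPimg]
      rw [Finset.card_image_of_injOn
        (hprodinj.mono (Finset.coe_subset.mpr (Finset.filter_subset _ _)))]
    have hPeq : P = (B.filter fun b => b ∈ Hf) ×ˢ
        ({![0,0,0,0,0], ![0,2,2,4,4], ![2,0,4,4,2], ![2,4,0,2,4],
            ![4,4,2,0,2], ![4,2,4,2,0]} : Finset (Fin 5 → ZMod 6)) := by
      ext ⟨b, k⟩
      rw [hP]
      simp only [Finset.mem_filter, Finset.mem_product]
      constructor
      · rintro ⟨⟨hb, hk⟩, hsum⟩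
        refine ⟨⟨hb, ?_⟩, hk⟩
        rw [hHf, Finset.mem_filter] at hsum ⊢
        refine ⟨Finset.mem_univ _, fun i => ?_⟩
        have h10 := hsum.2 i
        rw [Pi.add_apply, mul_add, hKt3 k hk i, add_zero] at h10
        exact h10
      · rintro ⟨⟨hb, hbH⟩, hk⟩
        refine ⟨⟨hb, hk⟩, ?_⟩
        rw [hHf, Finset.mem_filter] at hbH ⊢
        refine ⟨Finset.mem_univ _, fun i => ?_⟩
        rw [Pi.add_apply, mul_add, hKt3 k hk i, add_zero]
        exact hbH.2 i
    rw [hPeq, Finset.card_product] at hPcard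
    have hK6 : ({![0,0,0,0,0], ![0,2,2,4,4], ![2,0,4,4,2], ![2,4,0,2,4],
            ![4,4,2,0,2], ![4,2,4,2,0]} : Finset (Fin 5 → ZMod 6)).card = 6 := by decide
    rw [hK6] at hPcard
    omega
end
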